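/- arXiv:1811.02039 — 5 statements merged into one kernel-verified Lean document; each statement's English description precedes it below -/
import Mathlib

section
/- For n ≥ 2 and 0 ≤ k ≤ n-1, the k-th elementary symmetric polynomial in the Young–Jucys–Murphy elements R_2,…,R_n of the group algebra ℂ[S_n] equals the sum, in the group algebra, of all permutations of S_n having exactly n−k cycles. -/
open Finset

/-- number of cycles of a permutation, counting fixed points -/
def numCycles {n : ℕ} (σ : Equiv.Perm (Fin n)) : ℕ :=
  σ.cycleType.card + (Finset.univ.filter fun x => σ x = x).card

/-- the Young–Jucys–Murphy element `R_i = ∑_{j<i} (j,i)` in `ℂ[S_n]`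
(indices `0`-based: `R_i` for `i : Fin n` corresponds to `R_{i+1}` in `1`-based notation,
and `R_0 = 0`). -/
noncomputable def JM {n : ℕ} (i : Fin n) : MonoidAlgebra ℂ (Equiv.Perm (Fin n)) :=
  ∑ j ∈ Finset.univ.filter (· < i), MonoidAlgebra.single (Equiv.swap j i) 1

/-!
Both sides satisfy the same recursion. Let `E(m, k) = e_k(R_0, …, R_{m-1})` (0-based, `R_0 = 0`)
and let `P(m, k)` be the sum of the permutations that fix every point `≥ m` and have `n - k`
cycles. Expanding `e_{k+1}` according to whether the largest index `m` is used gives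
`E(m+1, k+1) = E(m, k+1) + E(m, k) R_m`. On the other side, a permutation `σ` fixing every
point `> m` either fixes `m`, or factors uniquely as `σ = σ' (j m)` with `σ'` fixing `m` and
`j = σ⁻¹ m < m`; right multiplication by `(j m)` attaches the fixed point `m` to the cycle of `j`
and so removes one cycle. Hence `P(m+1, k+1) = P(m, k+1) + P(m, k) R_m`, and both agree at
`m = 0` and at `k = 0`.
-/

open Equiv Equiv.Perm

namespace Equiv.Perm

variable {α : Type*} [Fintype α] [DecidableEq α]

theorem IsCycle.card_cycleType_swap_mul_add_card_support {c : Perm α} (hc : c.IsCycle) {x : α}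
    (hx : c x ≠ x) :
    Multiset.card (swap x (c x) * c).cycleType + #c.support =
      #(swap x (c x) * c).support + 2 := by
  by_cases hcc : c (c x) = x
  · have hsw := hc.eq_swap_of_apply_apply_eq_self hx hcc
    have hone : swap x (c x) * c = 1 := by
      conv_lhs => rhs; rw [hsw]
      exact swap_mul_self _ _
    rw [hone, hsw, card_support_swap hx.symm]
    simp
  · rw [(hc.swap_mul hx hcc).cycleType, support_swap_mul_eq c x hcc, Multiset.card_singleton,
      ← card_sdiff_add_card_eq_card (singleton_subset_iff.mpr (mem_support.mpr hx)),
      card_singleton]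
    omega

/-- With cycles counted as `card cycleType + (card α - #support)`, this says that
`swap x (f x) * f` has one cycle more than `f`: it splits `x` off its cycle. -/
theorem card_cycleType_swap_mul_add_card_support {f : Perm α} {x : α} (hx : f x ≠ x) :
    Multiset.card (swap x (f x) * f).cycleType + #f.support =
      Multiset.card f.cycleType + #(swap x (f x) * f).support + 1 := by
  set c := f.cycleOf x
  have hcyc : c.IsCycle := isCycle_cycleOf f hx
  have hcx : c x = f x := cycleOf_apply_self f x
  set ρ := f * c⁻¹
  have hρc : ρ.Disjoint c :=
    disjoint_mul_inv_of_mem_cycleFactorsFinset (cycleOf_mem_cycleFactorsFinset_iff.mpr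
      (mem_support.mpr hx))
  have hf : f = c * ρ := by rw [← hρc.commute.eq, inv_mul_cancel_right]
  set g := swap x (c x) * c
  have hgρ : g.Disjoint ρ :=
    hρc.symm.mono (fun _ hy => (mem_support_swap_mul_imp_mem_support_ne hy).1) le_rfl
  have hsplit : swap x (f x) * f = g * ρ := by rw [← hcx, mul_assoc, ← hf]
  have hcg : Multiset.card g.cycleType + #c.support = #g.support + 2 :=
    hcyc.card_cycleType_swap_mul_add_card_support (hcx ▸ hx)
  rw [hsplit, hgρ.cycleType_mul, hgρ.card_support_mul, hf, hρc.symm.cycleType_mul,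
    hρc.symm.card_support_mul, hcyc.cycleType, Multiset.card_add, Multiset.card_add,
    Multiset.card_singleton]
  omega

end Equiv.Perm

theorem Finset.sort_insert_of_forall_le {α : Type*} [LinearOrder α] [DecidableEq α]
    {s : Finset α} {a : α} (hle : ∀ b ∈ s, b ≤ a) (ha : a ∉ s) :
    (insert a s).sort (· ≤ ·) = s.sort (· ≤ ·) ++ [a] := by
  refine List.Perm.eq_of_pairwise' (pairwise_sort _ _) ?_ ?_
  · exact List.pairwise_append.mpr ⟨pairwise_sort _ _, List.pairwise_singleton _ _,
      fun b hb c hc => List.mem_singleton.mp hc ▸ hle b ((mem_sort _).mp hb)⟩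
  · refine List.Perm.trans ?_ (List.perm_append_singleton a _).symm
    rw [← Multiset.coe_eq_coe, ← Multiset.cons_coe, sort_eq, sort_eq, insert_val_of_notMem ha]

section

variable {n : ℕ}

theorem numCycles_eq (σ : Perm (Fin n)) :
    numCycles σ = Multiset.card σ.cycleType + (n - #σ.support) := by
  have hfix : (univ.filter fun x => σ x = x) = σ.supportᶜ := by
    ext x
    simp [mem_support]
  rw [numCycles, hfix, card_compl, Fintype.card_fin]

theorem card_support_le (σ : Perm (Fin n)) : #σ.support ≤ n :=
  (card_le_univ _).trans (Fintype.card_fin n).le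

@[simp]
theorem numCycles_one : numCycles (1 : Perm (Fin n)) = n := by
  simp [numCycles]

theorem numCycles_eq_self_iff {σ : Perm (Fin n)} : numCycles σ = n ↔ σ = 1 := by
  refine ⟨fun h => ?_, fun h => h ▸ numCycles_one⟩
  have htwo : Multiset.card σ.cycleType * 2 ≤ #σ.support := by
    rw [← sum_cycleType, ← smul_eq_mul]
    exact Multiset.card_nsmul_le_sum fun _ => two_le_of_mem_cycleType
  rw [numCycles_eq] at h
  exact card_cycleType_eq_zero.mp (by have := card_support_le σ; omega)

theorem numCycles_mul_swap {σ : Perm (Fin n)} {i j : Fin n} (hi : σ i = i) (hji : j ≠ i) :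
    numCycles (σ * swap j i) + 1 = numCycles σ := by
  -- `τ = σ * swap j i` has `τ⁻¹ i = j`, and splitting `i` off its cycle in `τ⁻¹` gives `σ⁻¹`.
  have hτ : (σ * swap j i)⁻¹ i = j := by
    rw [mul_inv_rev, swap_inv, Perm.mul_apply, inv_eq_iff_eq.mpr hi.symm, swap_apply_right]
  have hback : swap i ((σ * swap j i)⁻¹ i) * (σ * swap j i)⁻¹ = σ⁻¹ := by
    rw [hτ, mul_inv_rev, swap_inv, swap_comm, ← mul_assoc, swap_mul_self, one_mul]
  have h := card_cycleType_swap_mul_add_card_support (f := (σ * swap j i)⁻¹) (x := i)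
    (by rw [hτ]; exact hji)
  rw [hback, cycleType_inv, support_inv, cycleType_inv, support_inv] at h
  rw [numCycles_eq, numCycles_eq]
  have := card_support_le σ
  have := card_support_le (σ * swap j i)
  omega

theorem JM_eq_zero {i : Fin n} (hi : (i : ℕ) = 0) : JM i = 0 :=
  sum_eq_zero fun j hj => absurd (mem_filter.mp hj).2 (by rw [Fin.lt_def]; omega)

/-- `e_k(R_0, …, R_{m-1})`, each monomial taken in increasing order of indices. -/
noncomputable def esymmJM (n m k : ℕ) : MonoidAlgebra ℂ (Perm (Fin n)) :=
  ∑ s ∈ (univ.filter fun i : Fin n => (i : ℕ) < m).powersetCard k,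
    ((s.sort (· ≤ ·)).map JM).prod

/-- Having `n - k` cycles is stated as `numCycles σ + k = n`, avoiding truncated subtraction. -/
noncomputable def cyclePermSum (n m k : ℕ) : MonoidAlgebra ℂ (Perm (Fin n)) :=
  ∑ σ ∈ univ.filter (fun σ : Perm (Fin n) =>
    numCycles σ + k = n ∧ ∀ x : Fin n, m ≤ (x : ℕ) → σ x = x), MonoidAlgebra.single σ 1

theorem esymmJM_zero_right (m : ℕ) : esymmJM n m 0 = 1 := by
  simp [esymmJM, MonoidAlgebra.one_def]

theorem esymmJM_zero_succ (k : ℕ) : esymmJM n 0 (k + 1) = 0 := by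
  rw [esymmJM, powersetCard_eq_empty.mpr (by simp), sum_empty]

theorem cyclePermSum_zero_right (m : ℕ) : cyclePermSum n m 0 = 1 := by
  have hone : (univ.filter fun σ : Perm (Fin n) =>
      numCycles σ + 0 = n ∧ ∀ x : Fin n, m ≤ (x : ℕ) → σ x = x) = {1} := by
    ext σ
    simp only [mem_filter, mem_univ, true_and, mem_singleton, add_zero, numCycles_eq_self_iff]
    exact ⟨And.left, fun h => ⟨h, fun x _ => by simp [h]⟩⟩
  rw [cyclePermSum, hone, sum_singleton, MonoidAlgebra.one_def]

theorem cyclePermSum_zero_succ (k : ℕ) : cyclePermSum n 0 (k + 1) = 0 := by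
  refine sum_eq_zero fun σ hσ => ?_
  obtain ⟨hcyc, hfix⟩ := (mem_filter.mp hσ).2
  obtain rfl : σ = 1 := Equiv.ext fun x => hfix x (Nat.zero_le _)
  rw [numCycles_one] at hcyc
  omega

theorem esymmJM_succ_succ {m : ℕ} (hm : m < n) (k : ℕ) :
    esymmJM n (m + 1) (k + 1) = esymmJM n m (k + 1) + esymmJM n m k * JM ⟨m, hm⟩ := by
  set A := univ.filter fun i : Fin n => (i : ℕ) < m
  have hmA : ∀ s ∈ A.powersetCard k, (⟨m, hm⟩ : Fin n) ∉ s := fun s hs hms => by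
    simpa [A] using (mem_powersetCard.mp hs).1 hms
  have hinsert : (univ.filter fun i : Fin n => (i : ℕ) < m + 1) = insert ⟨m, hm⟩ A := by
    ext i
    simp only [mem_filter, mem_univ, true_and, mem_insert, Fin.ext_iff, A]
    omega
  have hdisj : Disjoint (A.powersetCard (k + 1)) ((A.powersetCard k).image (insert ⟨m, hm⟩)) :=
    disjoint_right.mpr fun s hs hsA => by
      obtain ⟨t, -, rfl⟩ := mem_image.mp hs
      simpa [A] using (mem_powersetCard.mp hsA).1 (mem_insert_self _ t)
  rw [esymmJM, hinsert, powersetCard_succ_insert (by simp [A]), sum_union hdisj,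
    sum_image fun s hs t ht hst => by
      rw [← erase_insert (hmA s hs), hst, erase_insert (hmA t ht)],
    esymmJM, esymmJM, sum_mul]
  congr 1
  refine sum_congr rfl fun s hs => ?_
  have hle : ∀ b ∈ s, b ≤ ⟨m, hm⟩ := fun b hb =>
    Fin.le_def.mpr (mem_filter.mp ((mem_powersetCard.mp hs).1 hb)).2.le
  rw [sort_insert_of_forall_le hle (hmA s hs), List.map_append, List.prod_append,
    List.map_singleton, List.prod_singleton]

theorem sum_moving_eq_cyclePermSum_mul_JM {m : ℕ} (hm : m < n) (k : ℕ) :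
    ∑ σ ∈ univ.filter (fun σ : Perm (Fin n) =>
      (numCycles σ + (k + 1) = n ∧ ∀ x : Fin n, m + 1 ≤ (x : ℕ) → σ x = x) ∧
        ¬σ ⟨m, hm⟩ = ⟨m, hm⟩), MonoidAlgebra.single σ 1 =
      cyclePermSum n m k * JM ⟨m, hm⟩ := by
  set i : Fin n := ⟨m, hm⟩
  have hi : (i : ℕ) = m := rfl
  rw [cyclePermSum, JM, sum_mul_sum, ← sum_product']
  simp only [MonoidAlgebra.single_mul_single, one_mul]
  refine sum_nbij' (fun σ => (σ * swap (σ⁻¹ i) i, σ⁻¹ i)) (fun p => p.1 * swap p.2 i)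
    ?_ ?_ (fun σ _ => mul_swap_mul_self _ _ _) ?_ (fun σ _ => by rw [mul_swap_mul_self])
  · intro σ hσ
    simp only [mem_filter, mem_univ, true_and] at hσ
    obtain ⟨⟨hcyc, hfix⟩, hmove⟩ := hσ
    set j := σ⁻¹ i
    have hσj : σ j = i := σ.apply_symm_apply i
    have hji : j ≠ i := fun h => hmove (h ▸ hσj)
    have hjm : (j : ℕ) < m := by
      by_contra h
      exact hji (hσj ▸ (hfix j (by have := Fin.val_ne_of_ne hji; omega)).symm)
    have hσ'i : (σ * swap j i) i = i := by simp [hσj]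
    have hcyc' := numCycles_mul_swap hσ'i hji
    rw [mul_swap_mul_self] at hcyc'
    simp only [mem_product, mem_filter, mem_univ, true_and]
    refine ⟨⟨by omega, fun x hx => ?_⟩, hjm⟩
    rcases hx.eq_or_lt with hxm | hxm
    · rwa [show x = i from Fin.ext hxm.symm]
    · rw [Perm.mul_apply, swap_apply_of_ne_of_ne (Fin.ne_of_val_ne (by omega))
        (Fin.ne_of_val_ne (by omega)), hfix x hxm]
  · rintro ⟨σ, j⟩ hp
    simp only [mem_product, mem_filter, mem_univ, true_and] at hp
    obtain ⟨⟨hcyc, hfix⟩, hji⟩ := hp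
    have hjm : (j : ℕ) < m := hji
    have hσi : σ i = i := hfix i le_rfl
    have hcyc' := numCycles_mul_swap hσi hji.ne
    simp only [mem_filter, mem_univ, true_and]
    refine ⟨⟨by omega, fun x hx => ?_⟩, ?_⟩
    · rw [Perm.mul_apply, swap_apply_of_ne_of_ne (Fin.ne_of_val_ne (by omega))
        (Fin.ne_of_val_ne (by omega)), hfix x (by omega)]
    · rw [Perm.mul_apply, swap_apply_right]
      exact fun h => hji.ne (σ.injective (h.trans hσi.symm))
  · rintro ⟨σ, j⟩ hp
    simp only [mem_product, mem_filter, mem_univ, true_and] at hp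
    have hinv : (σ * swap j i)⁻¹ i = j := inv_eq_iff_eq.mpr (by simp [hp.1.2 i le_rfl])
    simp only [hinv, mul_swap_mul_self]

theorem cyclePermSum_succ_succ {m : ℕ} (hm : m < n) (k : ℕ) :
    cyclePermSum n (m + 1) (k + 1) =
      cyclePermSum n m (k + 1) + cyclePermSum n m k * JM ⟨m, hm⟩ := by
  set i : Fin n := ⟨m, hm⟩
  rw [cyclePermSum, ← sum_filter_add_sum_filter_not _ (fun σ => σ i = i), filter_filter,
    filter_filter, sum_moving_eq_cyclePermSum_mul_JM hm]
  congr 1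
  refine sum_congr (filter_congr fun σ _ => ?_) fun _ _ => rfl
  constructor
  · rintro ⟨⟨hcyc, hfix⟩, hσi⟩
    refine ⟨hcyc, fun x hx => ?_⟩
    rcases hx.eq_or_lt with hxm | hxm
    · rwa [show x = i from Fin.ext hxm.symm]
    · exact hfix x hxm
  · rintro ⟨hcyc, hfix⟩
    exact ⟨⟨hcyc, fun x hx => hfix x (by omega)⟩, hfix i le_rfl⟩

theorem esymmJM_eq_cyclePermSum {m : ℕ} (hm : m ≤ n) (k : ℕ) :
    esymmJM n m k = cyclePermSum n m k := by
  induction m generalizing k with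
  | zero =>
    cases k with
    | zero => rw [esymmJM_zero_right, cyclePermSum_zero_right]
    | succ k => rw [esymmJM_zero_succ, cyclePermSum_zero_succ]
  | succ m ih =>
    cases k with
    | zero => rw [esymmJM_zero_right, cyclePermSum_zero_right]
    | succ k =>
      rw [esymmJM_succ_succ hm, cyclePermSum_succ_succ hm, ih (by omega), ih (by omega)]

theorem sum_powersetCard_filter_pos_eq_esymmJM (k : ℕ) :
    ∑ s ∈ (univ.filter fun i : Fin n => 0 < (i : ℕ)).powersetCard k,
      ((s.sort (· ≤ ·)).map JM).prod = esymmJM n n k := by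
  have huniv : (univ.filter fun i : Fin n => (i : ℕ) < n) = univ :=
    filter_true_of_mem fun i _ => i.isLt
  rw [esymmJM, huniv]
  refine sum_subset (powersetCard_mono (subset_univ _)) fun s hs hs' => ?_
  obtain ⟨i, his, hi⟩ : ∃ i ∈ s, (i : ℕ) = 0 := by
    by_contra! h
    exact hs' (mem_powersetCard.mpr ⟨fun i hi => mem_filter.mpr ⟨mem_univ _,
      Nat.pos_of_ne_zero (h i hi)⟩, (mem_powersetCard.mp hs).2⟩)
  exact List.prod_eq_zero (List.mem_map.mpr ⟨i, (mem_sort _).mpr his, JM_eq_zero hi⟩)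

end

theorem stmt2_general (n : ℕ) (k : ℕ) (hk : k ≤ n - 1) :
    ∑ s ∈ (Finset.univ.filter fun i : Fin n => 0 < (i : ℕ)).powersetCard k,
      ((s.sort (· ≤ ·)).map JM).prod =
    ∑ σ ∈ Finset.univ.filter (fun σ : Equiv.Perm (Fin n) => numCycles σ = n - k),
      MonoidAlgebra.single σ (1 : ℂ) := by
  rw [sum_powersetCard_filter_pos_eq_esymmJM, esymmJM_eq_cyclePermSum le_rfl, cyclePermSum]
  refine sum_congr (filter_congr fun σ _ => ?_) fun _ _ => rfl
  exact ⟨fun h => by omega, fun h => ⟨by omega, fun x hx => absurd x.isLt hx.not_gt⟩⟩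

/-- Diaconis–Green: the `k`-th elementary symmetric function
`e_k(R_2,…,R_n) = ∑_{i₁<⋯<i_k} R_{i₁}⋯R_{i_k}` in the Young–Jucys–Murphy elements equals
the sum in the group algebra of all permutations of `S_n` with exactly `n-k` cycles. -/
theorem stmt2 (n : ℕ) (hn : 2 ≤ n) (k : ℕ) (hk : k ≤ n - 1) :
    ∑ s ∈ (Finset.univ.filter fun i : Fin n => 0 < (i : ℕ)).powersetCard k,
      ((s.sort (· ≤ ·)).map JM).prod =
    ∑ σ ∈ Finset.univ.filter (fun σ : Equiv.Perm (Fin n) => numCycles σ = n - k),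
      MonoidAlgebra.single σ (1 : ℂ) :=
  stmt2_general n k hk
end

section
/- Let k be a positive integer and λ, μ partitions of n with λ ⪰ μ in dominance order. Then ∏_{boxes b of λ}(k + c(b)) ≥ ∏_{boxes b of μ}(k + c(b)) ≥ 0, where c(b) is the content of box b. -/
/-!
A diagram with more than `k` rows contains the cell `(k, 0)`, of content `-k`, so its product
vanishes; and `λ ⪰ μ` forces `λ` to have no more rows than `μ`. For diagrams with at most `k` rows,
row `i` contributes `(λᵢ + k - 1 - i)! / (k - 1 - i)!`, so it suffices to show `∏ yᵢ! ≤ ∏ xᵢ!` for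
`xᵢ = λᵢ + k - 1 - i` and `yᵢ = μᵢ + k - 1 - i`, whose partial sums satisfy
`∑_{i<j} yᵢ ≤ ∑_{i<j} xᵢ`. This is Karamata's inequality for the log-convex `m ↦ m!`: the tangent
bound `y! (y + 1)^x ≤ x! (y + 1)^y` reduces it to `∏ cᵢ^yᵢ ≤ ∏ cᵢ^xᵢ` for the decreasing weights
`cᵢ = yᵢ + 1`, which is a multiplicative Abel summation.
-/

open Finset

/-- Young diagram of a partition -/
def toYD {n : ℕ} (p : Nat.Partition n) : YoungDiagram :=
  YoungDiagram.ofRowLens (p.parts.sort (· ≥ ·)) (List.sortedGE_iff_pairwise.mpr (p.parts.pairwise_sort (· ≥ ·)))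

/-- dominance order on partitions of `n` -/
def Dominates {n : ℕ} (p q : Nat.Partition n) : Prop :=
  ∀ j, ((q.parts.sort (· ≥ ·)).take j).sum ≤ ((p.parts.sort (· ≥ ·)).take j).sum

open Nat YoungDiagram

theorem prod_pow_le_prod_pow_of_sum_range_le {R : Type*} [CommSemiring R] [PartialOrder R]
    [IsOrderedRing R] {c : ℕ → R} (hc : Antitone c) (hc1 : ∀ i, 1 ≤ c i) {k : ℕ} {x y : ℕ → ℕ}
    (h : ∀ j ≤ k, ∑ i ∈ range j, y i ≤ ∑ i ∈ range j, x i) :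
    ∏ i ∈ range k, c i ^ y i ≤ ∏ i ∈ range k, c i ^ x i := by
  have hc0 (i : ℕ) : 0 ≤ c i := zero_le_one.trans (hc1 i)
  have hprod (k : ℕ) (z : ℕ → ℕ) : 0 ≤ ∏ i ∈ range k, c i ^ z i :=
    prod_nonneg fun i _ => pow_nonneg (hc0 i) _
  induction k generalizing y with
  | zero => simp
  | succ k ih =>
    rw [prod_range_succ, prod_range_succ]
    by_cases hyx : y k ≤ x k
    · exact mul_le_mul (ih fun j hj => h j (by omega)) (pow_le_pow_right₀ (hc1 k) hyx)
        (pow_nonneg (hc0 k) _) (hprod k x)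
    rcases k with _ | m
    · exact absurd (by simpa using h 1 le_rfl) hyx
    -- the excess `e` of the last row is moved up one row, where the weight `c` is larger
    set e := y (m + 1) - x (m + 1)
    set y' : ℕ → ℕ := fun i => y i + if i = m then e else 0
    have hy' : ∀ j ≤ m + 1, ∑ i ∈ range j, y' i ≤ ∑ i ∈ range j, x i := by
      intro j hj
      have hj' := h j (by omega)
      have hlast := h (m + 2) le_rfl
      simp only [y', sum_add_distrib, sum_ite_eq', mem_range]
      split_ifs with hmj
      · obtain rfl : j = m + 1 := by omega
        rw [sum_range_succ _ (m + 1), sum_range_succ _ (m + 1)] at hlast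
        omega
      · omega
    have hy'_prod :
        ∏ i ∈ range (m + 1), c i ^ y' i = (∏ i ∈ range (m + 1), c i ^ y i) * c m ^ e := by
      rw [prod_range_succ, prod_range_succ, mul_assoc, ← pow_add]
      congr 1
      · exact prod_congr rfl fun i hi => by simp [y', (mem_range.mp hi).ne]
      · simp [y']
    calc (∏ i ∈ range (m + 1), c i ^ y i) * c (m + 1) ^ y (m + 1)
        = (∏ i ∈ range (m + 1), c i ^ y i) * c (m + 1) ^ e * c (m + 1) ^ x (m + 1) := by
          rw [mul_assoc, ← pow_add, Nat.sub_add_cancel (le_of_not_ge hyx)]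
      _ ≤ (∏ i ∈ range (m + 1), c i ^ y' i) * c (m + 1) ^ x (m + 1) := by
          rw [hy'_prod]
          exact mul_le_mul_of_nonneg_right (mul_le_mul_of_nonneg_left
            (pow_le_pow_left₀ (hc0 _) (hc m.le_succ) e) (hprod _ y)) (pow_nonneg (hc0 _) _)
      _ ≤ _ := mul_le_mul_of_nonneg_right (ih hy') (pow_nonneg (hc0 _) _)

theorem Nat.factorial_mul_pow_le_factorial_mul_pow (x y : ℕ) :
    y ! * (y + 1) ^ x ≤ x ! * (y + 1) ^ y := by
  rcases le_total y x with hyx | hxy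
  · obtain ⟨d, rfl⟩ := Nat.exists_eq_add_of_le hyx
    rw [pow_add, mul_left_comm, mul_comm _ ((y + 1) ^ y)]
    exact Nat.mul_le_mul_left _ factorial_mul_pow_le_factorial
  · obtain ⟨d, rfl⟩ := Nat.exists_eq_add_of_le hxy
    rw [← factorial_mul_ascFactorial, pow_add, mul_comm ((x + d + 1) ^ x), ← mul_assoc]
    gcongr
    exact (ascFactorial_le_pow_add x d).trans (Nat.pow_le_pow_left (by omega) d)

theorem prod_factorial_le_prod_factorial_of_sum_range_le {x y : ℕ → ℕ} (hy : Antitone y) {k : ℕ}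
    (h : ∀ j ≤ k, ∑ i ∈ range j, y i ≤ ∑ i ∈ range j, x i) :
    ∏ i ∈ range k, (y i)! ≤ ∏ i ∈ range k, (x i)! := by
  set c : ℕ → ℕ := fun i => y i + 1
  have hc : ∏ i ∈ range k, c i ^ y i ≤ ∏ i ∈ range k, c i ^ x i :=
    prod_pow_le_prod_pow_of_sum_range_le (fun i j hij => by simp [c, hy hij]) (fun i => by simp [c])
      h
  have htangent : (∏ i ∈ range k, (y i)!) * ∏ i ∈ range k, c i ^ x i ≤
      (∏ i ∈ range k, (x i)!) * ∏ i ∈ range k, c i ^ y i := by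
    simp only [← prod_mul_distrib]
    exact prod_le_prod' fun i _ => factorial_mul_pow_le_factorial_mul_pow (x i) (y i)
  have hpos : 0 < ∏ i ∈ range k, c i ^ x i := prod_pos fun i _ => by positivity
  exact le_of_mul_le_mul_right (htangent.trans (Nat.mul_le_mul_left _ hc)) hpos

namespace YoungDiagram

theorem prod_cells_eq_prod_range_rowLen {M : Type*} [CommMonoid M] (μ : YoungDiagram) {m : ℕ}
    (hm : μ.colLen 0 ≤ m) (f : ℕ × ℕ → M) :
    ∏ b ∈ μ.cells, f b = ∏ i ∈ range m, ∏ j ∈ range (μ.rowLen i), f (i, j) :=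
  prod_finset_product _ _ _ fun ⟨i, j⟩ => by
    simp only [mem_cells, mem_range, ← mem_iff_lt_rowLen]
    exact ⟨fun h => ⟨(mem_iff_lt_colLen.mp (μ.up_left_mem le_rfl (zero_le j) h)).trans_le hm, h⟩,
      And.right⟩

theorem sum_range_rowLen (μ : YoungDiagram) (j : ℕ) :
    ∑ i ∈ range j, μ.rowLen i = (μ.rowLens.take j).sum := by
  induction j with
  | zero => simp
  | succ j ih =>
    rw [sum_range_succ, ih]
    by_cases hj : j < μ.rowLens.length
    · rw [List.sum_take_succ _ _ hj, get_rowLens]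
    · have hrow : μ.rowLen j = 0 := by
        by_contra hne
        exact hj (by simpa [← mem_iff_lt_colLen, mem_iff_lt_rowLen] using Nat.pos_of_ne_zero hne)
      rw [List.take_of_length_le (by omega), List.take_of_length_le (by omega), hrow, add_zero]

end YoungDiagram

def contentProd (k : ℕ) (μ : YoungDiagram) : ℤ := ∏ b ∈ μ.cells, ((k : ℤ) + b.2 - b.1)

theorem contentProd_eq_zero {k : ℕ} {μ : YoungDiagram} (h : k < μ.colLen 0) : contentProd k μ = 0 :=
  prod_eq_zero (i := (k, 0)) (mem_iff_lt_colLen.mpr h) (by simp)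

theorem prod_factorial_mul_contentProd {k : ℕ} {μ : YoungDiagram} (h : μ.colLen 0 ≤ k) :
    (∏ i ∈ range k, ((k - 1 - i)! : ℤ)) * contentProd k μ =
      ∏ i ∈ range k, ((μ.rowLen i + (k - 1 - i))! : ℤ) := by
  rw [contentProd, μ.prod_cells_eq_prod_range_rowLen h, ← prod_mul_distrib]
  refine prod_congr rfl fun i hi => ?_
  rw [add_comm, ← factorial_mul_ascFactorial, ascFactorial_eq_prod_range]
  push_cast
  congr 1
  refine prod_congr rfl fun j _ => ?_
  have := mem_range.mp hi
  omega

theorem contentProd_pos {k : ℕ} {μ : YoungDiagram} (h : μ.colLen 0 ≤ k) : 0 < contentProd k μ :=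
  pos_of_mul_pos_right ((prod_factorial_mul_contentProd h).symm ▸ prod_pos fun i _ => by positivity)
    (prod_nonneg fun i _ => by positivity)

theorem contentProd_nonneg (k : ℕ) (μ : YoungDiagram) : 0 ≤ contentProd k μ := by
  rcases le_or_gt (μ.colLen 0) k with h | h
  · exact (contentProd_pos h).le
  · exact (contentProd_eq_zero h).ge

theorem contentProd_le_contentProd {k : ℕ} {μ ν : YoungDiagram} (hμ : μ.colLen 0 ≤ k)
    (hν : ν.colLen 0 ≤ k) (h : ∀ j ≤ k, ∑ i ∈ range j, μ.rowLen i ≤ ∑ i ∈ range j, ν.rowLen i) :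
    contentProd k μ ≤ contentProd k ν := by
  have hfact : ∏ i ∈ range k, (μ.rowLen i + (k - 1 - i))! ≤
      ∏ i ∈ range k, (ν.rowLen i + (k - 1 - i))! :=
    prod_factorial_le_prod_factorial_of_sum_range_le
      (fun i j hij => Nat.add_le_add (μ.rowLen_anti i j hij) (by omega))
      fun j hj => by simpa only [sum_add_distrib] using Nat.add_le_add_right (h j hj) _
  have hpos : (0 : ℤ) < ∏ i ∈ range k, ((k - 1 - i)! : ℤ) := prod_pos fun i _ => by positivity
  refine le_of_mul_le_mul_left ?_ hpos
  rw [prod_factorial_mul_contentProd hμ, prod_factorial_mul_contentProd hν]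
  exact_mod_cast hfact

theorem rowLens_toYD {n : ℕ} (p : Nat.Partition n) : (toYD p).rowLens = p.parts.sort (· ≥ ·) :=
  rowLens_ofRowLens_eq_self fun _ hx => p.parts_pos ((Multiset.mem_sort _).mp hx)

theorem colLen_toYD {n : ℕ} (p : Nat.Partition n) : (toYD p).colLen 0 = p.parts.card := by
  rw [← length_rowLens, rowLens_toYD, Multiset.length_sort]

theorem Dominates.card_parts_le {n : ℕ} {p q : Nat.Partition n} (h : Dominates p q) :
    p.parts.card ≤ q.parts.card := by
  have hsum (r : Nat.Partition n) : (r.parts.sort (· ≥ ·)).sum = n := by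
    rw [← Multiset.sum_coe, Multiset.sort_eq, r.parts_sum]
  by_contra! hlt
  have hm : q.parts.card < (p.parts.sort (· ≥ ·)).length := by rwa [Multiset.length_sort]
  have hle := h q.parts.card
  rw [List.take_of_length_le (Multiset.length_sort _).le, hsum] at hle
  have hge : ((p.parts.sort (· ≥ ·)).take (q.parts.card + 1)).sum ≤ n :=
    ((List.take_sublist _ _).sum_le_sum fun _ _ => Nat.zero_le _).trans_eq (hsum p)
  rw [List.sum_take_succ _ _ hm] at hge
  have hpos := p.parts_pos ((Multiset.mem_sort _).mp (List.getElem_mem hm))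
  omega

theorem stmt6_general (n k : ℕ) (p q : Nat.Partition n) (hdom : Dominates p q) :
    (∏ b ∈ (toYD q).cells, ((k : ℤ) + b.2 - b.1)) ≤
      (∏ b ∈ (toYD p).cells, ((k : ℤ) + b.2 - b.1)) ∧
    0 ≤ ∏ b ∈ (toYD q).cells, ((k : ℤ) + b.2 - b.1) := by
  refine ⟨?_, contentProd_nonneg k (toYD q)⟩
  rcases le_or_gt ((toYD q).colLen 0) k with hq | hq
  · have hp : (toYD p).colLen 0 ≤ k := by
      rw [colLen_toYD] at hq ⊢
      exact hdom.card_parts_le.trans hq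
    exact contentProd_le_contentProd hq hp fun j _ => by
      simpa only [sum_range_rowLen, rowLens_toYD] using hdom j
  · exact (contentProd_eq_zero hq).trans_le (contentProd_nonneg k (toYD p))

/-- Eigenvalue monotonicity for integer parameter: if `λ ⪰ μ` in dominance order and
`k` is a positive integer, then `∏_b (k + c(b))` over boxes of `λ` is at least the same
product over boxes of `μ`, and both are nonnegative. -/
theorem stmt6 (n k : ℕ) (hk : 0 < k) (p q : Nat.Partition n) (hdom : Dominates p q) :
    (∏ b ∈ (toYD q).cells, ((k : ℤ) + b.2 - b.1)) ≤
      (∏ b ∈ (toYD p).cells, ((k : ℤ) + b.2 - b.1)) ∧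
    0 ≤ ∏ b ∈ (toYD q).cells, ((k : ℤ) + b.2 - b.1) :=
  stmt6_general n k p q hdom
end

section
/- For partitions λ of n with first part λ_1 fixed, the sum of squared dimensions of the corresponding irreducible representations of S_n satisfies Σ_{λ: λ has first row λ_1} d_λ² ≤ C(n, λ_1)² · (n − λ_1)!, where C(n,λ_1) is the binomial coefficient. -/
open Finset

/-- largest part of a partition -/
def firstPart {n : ℕ} (p : Nat.Partition n) : ℕ := (p.parts.sort (· ≥ ·)).headI

/-- number of standard Young tableaux of shape `Y` (the dimension `d_λ`) -/
def sytCard (Y : YoungDiagram) : ℕ :=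
  Fintype.card {f : (↥Y.cells) ≃ Fin Y.cells.card //
    (∀ a b : Y.cells, (a : ℕ × ℕ).1 = (b : ℕ × ℕ).1 → (a : ℕ × ℕ).2 < (b : ℕ × ℕ).2 →
      f a < f b) ∧
    (∀ a b : Y.cells, (a : ℕ × ℕ).2 = (b : ℕ × ℕ).2 → (a : ℕ × ℕ).1 < (b : ℕ × ℕ).1 →
      f a < f b)}

/-!
Standard Young tableaux of shape `λ ⊢ n` are the saturated chains `⊥ ⋖ ⋯ ⋖ λ` in Young's lattice.
Sorting the lower covers of `λ` by whether they shorten the first row gives Pascal's recursion for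
`C(n, λ₁) · d_λ̄`, where `λ̄` is `λ` without its first row; hence `d_λ ≤ C(n, λ₁) · d_λ̄`. For fixed
`λ₁` the map `λ ↦ λ̄` is injective, so it remains to see `∑_{|μ| = m} d_μ² ≤ m!`. This is the
up-down argument: Young's lattice is modular and every diagram has at most one more upper cover
than lower covers, which gives `∑_{ν ⋗ μ} d_ν ≤ (|μ| + 1) · d_μ` by induction on `|μ|`, and then
`∑_{|ν| = m + 1} d_ν² = ∑_{|μ| = m} d_μ · ∑_{ν ⋗ μ} d_ν ≤ (m + 1) · ∑_{|μ| = m} d_μ²`.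
-/

section SaturatedChains

variable {α : Type*} [PartialOrder α] [OrderBot α] [DecidableEq α]
  [∀ y : α, Fintype {x | x ⋖ y}]

/-- Saturated chains `⊥ = x₀ ⋖ x₁ ⋖ ⋯ ⋖ xₘ = y`, encoded as the lists `[xₘ, …, x₁, x₀]`. -/
def saturatedChains : ℕ → α → Finset (List α)
  | 0, y => if y = ⊥ then {[y]} else ∅
  | m + 1, y => {x | x ⋖ y}.toFinset.biUnion fun x => (saturatedChains m x).image (y :: ·)

def numChains (m : ℕ) (y : α) : ℕ := #(saturatedChains m y)

theorem numChains_zero (y : α) : numChains 0 y = if y = ⊥ then 1 else 0 := by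
  unfold numChains saturatedChains
  split_ifs <;> rfl

theorem head?_of_mem_saturatedChains {m : ℕ} {y : α} {l : List α}
    (hl : l ∈ saturatedChains m y) : l.head? = some y := by
  cases m with
  | zero =>
    simp only [saturatedChains] at hl
    split_ifs at hl <;> simp_all
  | succ m =>
    simp only [saturatedChains, mem_biUnion, mem_image] at hl
    obtain ⟨x, -, l', -, rfl⟩ := hl
    rfl

theorem numChains_succ (m : ℕ) (y : α) :
    numChains (m + 1) y = ∑ x ∈ {x | x ⋖ y}.toFinset, numChains m x := by
  rw [numChains, saturatedChains, card_biUnion]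
  · exact sum_congr rfl fun x _ => card_image_of_injective _ (List.cons_injective)
  · intro x _ x' _ hne
    simp only [Function.onFun, disjoint_left, mem_image]
    rintro _ ⟨l, hl, rfl⟩ ⟨l', hl', hll'⟩
    have := head?_of_mem_saturatedChains hl
    have := head?_of_mem_saturatedChains hl'
    simp_all

theorem numChains_zero_of_covBy {x y : α} (h : x ⋖ y) : numChains 0 y = 0 := by
  rw [numChains_zero, if_neg (ne_bot_of_gt h.lt)]

theorem map_range_mem_saturatedChains {Z : ℕ → α} {m : ℕ} (h0 : Z 0 = ⊥)
    (hZ : ∀ k < m, Z k ⋖ Z (k + 1)) :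
    (List.range (m + 1)).reverse.map Z ∈ saturatedChains m (Z m) := by
  induction m with
  | zero => simp [saturatedChains, h0]
  | succ m ih =>
    rw [List.range_succ, List.reverse_append, saturatedChains, mem_biUnion]
    exact ⟨Z m, Set.mem_toFinset.2 (hZ m m.lt_succ_self),
      mem_image.2 ⟨_, ih fun k hk => hZ k (by omega), rfl⟩⟩

theorem card_le_numChains {ι : Type*} [Fintype ι] {m : ℕ} {y : α} (Z : ι → ℕ → α)
    (h0 : ∀ i, Z i 0 = ⊥) (hZ : ∀ i, ∀ k < m, Z i k ⋖ Z i (k + 1)) (htop : ∀ i, Z i m = y)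
    (hinj : ∀ i j, (∀ k ≤ m, Z i k = Z j k) → i = j) :
    Fintype.card ι ≤ numChains m y := by
  rw [numChains, ← card_univ]
  refine card_le_card_of_injOn (fun i => (List.range (m + 1)).reverse.map (Z i)) ?_ ?_
  · intro i _
    simpa [htop] using map_range_mem_saturatedChains (h0 i) (hZ i)
  · intro i _ j _ hij
    refine hinj i j fun k hk => ?_
    exact (List.map_inj_left.1 hij) k (by simp; omega)

end SaturatedChains

section LowerModular

variable {α : Type*} [Lattice α] [IsLowerModularLattice α]

theorem inf_covBy_and_sup_eq_of_covBy {x y z : α} (hx : x ⋖ y) (hz : z ⋖ y) (hne : z ≠ x) :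
    x ⊓ z ⋖ x ∧ x ⊓ z ⋖ z ∧ x ⊔ z = y := by
  have hsup : x ⊔ z = y := by
    refine (hx.eq_or_eq le_sup_left (sup_le hx.le hz.le)).resolve_left fun h => ?_
    rcases hz.eq_or_eq (h ▸ le_sup_right) hx.le with h' | h'
    · exact hne h'.symm
    · exact hx.ne h'
  exact ⟨inf_covBy_of_covBy_sup_right (hsup ▸ hz), inf_covBy_of_covBy_sup_left (hsup ▸ hx), hsup⟩

variable [DecidableEq α] [∀ y : α, Fintype {x | x ⋖ y}] [∀ x : α, Fintype {y | x ⋖ y}]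

/-- `(y, z) ↦ (x ⊓ z, z)` embeds the "up then down" paths from `x` into the "down then up" ones. -/
theorem sum_upperCovers_sum_lowerCovers_erase_le (f : α → ℕ) (x : α) :
    ∑ y ∈ {y | x ⋖ y}.toFinset, ∑ z ∈ {z | z ⋖ y}.toFinset.erase x, f z ≤
      ∑ w ∈ {w | w ⋖ x}.toFinset, ∑ z ∈ {z | w ⋖ z}.toFinset.erase x, f z := by
  rw [sum_sigma', sum_sigma']
  set up := {y | x ⋖ y}.toFinset.sigma fun y => {z | z ⋖ y}.toFinset.erase x
  set down := {w | w ⋖ x}.toFinset.sigma fun w => {z | w ⋖ z}.toFinset.erase x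
  have key : ∀ p ∈ up, x ⊓ p.2 ⋖ x ∧ x ⊓ p.2 ⋖ p.2 ∧ x ⊔ p.2 = p.1 ∧ p.2 ≠ x := by
    rintro ⟨y, z⟩ hp
    simp only [up, mem_sigma, mem_erase, Set.mem_toFinset] at hp
    obtain ⟨h1, h2, h3⟩ := inf_covBy_and_sup_eq_of_covBy hp.1 hp.2.2 hp.2.1
    exact ⟨h1, h2, h3, hp.2.1⟩
  let e : (_ : α) × α → (_ : α) × α := fun p => ⟨x ⊓ p.2, p.2⟩
  have he : Set.InjOn e up := by
    rintro ⟨y, z⟩ hp ⟨y', z'⟩ hp' h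
    simp only [e, Sigma.mk.injEq, heq_eq_eq] at h
    obtain ⟨-, -, hy, -⟩ := key _ hp
    obtain ⟨-, -, hy', -⟩ := key _ hp'
    simp_all
  calc ∑ p ∈ up, f p.2 = ∑ q ∈ up.image e, f q.2 := by rw [sum_image he]
    _ ≤ ∑ q ∈ down, f q.2 := by
      refine sum_le_sum_of_subset (image_subset_iff.2 fun p hp => ?_)
      obtain ⟨h1, h2, -, hne⟩ := key p hp
      simp [down, e, h1, h2, hne]

variable [OrderBot α]

theorem sum_numChains_upperCovers_le_of_sum_le
    (hcard : ∀ x : α, Fintype.card {y | x ⋖ y} ≤ Fintype.card {w | w ⋖ x} + 1) (m : ℕ) (x : α)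
    (hdown : ∑ w ∈ {w | w ⋖ x}.toFinset, ∑ z ∈ {z | w ⋖ z}.toFinset, numChains m z ≤
      m * numChains m x) :
    ∑ y ∈ {y | x ⋖ y}.toFinset, numChains (m + 1) y ≤ (m + 1) * numChains m x := by
  have split (s : Finset α) (t : α → Finset α) (hx : ∀ y ∈ s, x ∈ t y) :
      ∑ y ∈ s, ∑ z ∈ t y, numChains m z =
        #s * numChains m x + ∑ y ∈ s, ∑ z ∈ (t y).erase x, numChains m z := by
    rw [card_eq_sum_ones, sum_mul, ← sum_add_distrib]
    exact sum_congr rfl fun y hy => by rw [one_mul, add_sum_erase _ _ (hx y hy)]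
  have hsplitUp := split {y | x ⋖ y}.toFinset (fun y => {z | z ⋖ y}.toFinset) (by simp)
  have hsplitDown := split {w | w ⋖ x}.toFinset (fun w => {z | w ⋖ z}.toFinset) (by simp)
  simp only [← numChains_succ] at hsplitUp
  have hpaths := sum_upperCovers_sum_lowerCovers_erase_le (numChains m) x
  have hcard' : #{y | x ⋖ y}.toFinset * numChains m x ≤
      (#{w | w ⋖ x}.toFinset + 1) * numChains m x := by
    simpa only [Set.toFinset_card] using Nat.mul_le_mul_right _ (hcard x)
  linarith

theorem sum_numChains_upperCovers_le
    (hcard : ∀ x : α, Fintype.card {y | x ⋖ y} ≤ Fintype.card {w | w ⋖ x} + 1) (m : ℕ) (x : α) :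
    ∑ y ∈ {y | x ⋖ y}.toFinset, numChains (m + 1) y ≤ (m + 1) * numChains m x := by
  induction m generalizing x with
  | zero =>
    refine sum_numChains_upperCovers_le_of_sum_le hcard 0 x (le_of_eq ?_)
    simp only [zero_mul]
    exact sum_eq_zero fun w _ => sum_eq_zero fun z hz =>
      numChains_zero_of_covBy (x := w) (by simpa using hz)
  | succ m ih =>
    refine sum_numChains_upperCovers_le_of_sum_le hcard (m + 1) x ?_
    calc _ ≤ ∑ w ∈ {w | w ⋖ x}.toFinset, (m + 1) * numChains m w := sum_le_sum fun w _ => ih w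
      _ = (m + 1) * numChains (m + 1) x := by rw [← mul_sum, numChains_succ]

theorem sum_sq_numChains_le_factorial
    (hcard : ∀ x : α, Fintype.card {y | x ⋖ y} ≤ Fintype.card {w | w ⋖ x} + 1) (m : ℕ)
    (s : Finset α) : ∑ y ∈ s, numChains m y ^ 2 ≤ m.factorial := by
  induction m generalizing s with
  | zero =>
    simp only [numChains_zero, ite_pow, one_pow, zero_pow two_ne_zero, sum_ite_eq',
      Nat.factorial_zero]
    split_ifs <;> simp
  | succ m ih =>
    set t := s.biUnion fun y => {x | x ⋖ y}.toFinset
    calc ∑ y ∈ s, numChains (m + 1) y ^ 2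
        = ∑ y ∈ s, ∑ x ∈ {x | x ⋖ y}.toFinset, numChains (m + 1) y * numChains m x := by
          exact sum_congr rfl fun y _ => by rw [sq, ← mul_sum, ← numChains_succ]
      _ = ∑ x ∈ t, ∑ y ∈ s ∩ {y | x ⋖ y}.toFinset, numChains (m + 1) y * numChains m x :=
          sum_comm' fun y x => by simp only [t, mem_biUnion, mem_inter, Set.mem_toFinset]; grind
      _ ≤ ∑ x ∈ t, ((m + 1) * numChains m x) * numChains m x := by
          refine sum_le_sum fun x _ => ?_
          rw [← sum_mul]
          exact Nat.mul_le_mul_right _ (le_trans (sum_le_sum_of_subset inter_subset_right)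
            (sum_numChains_upperCovers_le hcard m x))
      _ = (m + 1) * ∑ x ∈ t, numChains m x ^ 2 := by simp only [mul_sum, sq, mul_assoc]
      _ ≤ (m + 1).factorial := by
          rw [Nat.factorial_succ]; exact Nat.mul_le_mul_left _ (ih t)

end LowerModular

namespace YoungDiagram

instance : DecidableEq YoungDiagram := fun _ _ => decidable_of_iff _ YoungDiagram.ext_iff.symm

theorem covBy_iff_exists_insert {X Y : YoungDiagram} :
    X ⋖ Y ↔ ∃ c ∉ X, Y.cells = insert c X.cells := by
  constructor
  · intro h
    have hne : (Y.cells \ X.cells).Nonempty :=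
      sdiff_nonempty.2 fun hsub => h.lt.not_ge (cells_subset_iff.1 hsub)
    -- a minimal new cell can be added to `X` on its own
    obtain ⟨c, hc⟩ := Finset.exists_minimal hne
    obtain ⟨hcY, hcX⟩ := mem_sdiff.1 hc.1
    let Z : YoungDiagram :=
      { cells := insert c X.cells
        isLowerSet := by
          intro a b hba ha
          rw [coe_insert] at ha ⊢
          rcases ha with rfl | ha
          · by_cases hb : b ∈ X.cells
            · exact Or.inr hb
            · exact Or.inl (le_antisymm hba
                (hc.2 (mem_sdiff.2 ⟨Y.isLowerSet hba hcY, hb⟩) hba))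
          · exact Or.inr (X.isLowerSet hba ha) }
    have hXZ : X < Z := cells_ssubset_iff.1 (ssubset_insert hcX)
    have hZY : Z ≤ Y := cells_subset_iff.1 (insert_subset hcY (cells_subset_iff.2 h.le))
    rcases h.eq_or_eq hXZ.le hZY with h' | h'
    · exact absurd h' hXZ.ne'
    · exact ⟨c, hcX, by rw [← h']⟩
  · rintro ⟨c, hc, hY⟩
    have hc' : c ∉ X.cells := hc
    refine ⟨cells_ssubset_iff.1 (hY ▸ ssubset_insert hc'), fun Z hXZ hZY => ?_⟩
    have h1 := card_lt_card (cells_ssubset_iff.2 hXZ)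
    have h2 := card_lt_card (cells_ssubset_iff.2 hZY)
    rw [hY, card_insert_of_notMem hc'] at h2
    omega

theorem fst_lt_card_and_snd_lt_card {μ : YoungDiagram} {c : ℕ × ℕ} (hc : c ∈ μ) :
    c.1 < μ.card ∧ c.2 < μ.card := by
  refine ⟨?_, ?_⟩
  · calc c.1 < μ.colLen c.2 := mem_iff_lt_colLen.1 hc
      _ ≤ μ.card := by rw [colLen_eq_card]; exact card_le_card (filter_subset _ _)
  · calc c.2 < μ.rowLen c.1 := mem_iff_lt_rowLen.1 hc
      _ ≤ μ.card := by rw [rowLen_eq_card]; exact card_le_card (filter_subset _ _)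

theorem finite_lowerCovers (Y : YoungDiagram) : {X | X ⋖ Y}.Finite := by
  refine ((Y.cells.image Y.cells.erase).finite_toSet.preimage
    (fun _ _ _ _ h => YoungDiagram.ext h)).subset fun X hX => ?_
  obtain ⟨c, hc, hY⟩ := covBy_iff_exists_insert.1 hX
  have hc' : c ∉ X.cells := hc
  exact mem_image.2 ⟨c, by simp [hY], by rw [hY, erase_insert hc']⟩

theorem finite_upperCovers (X : YoungDiagram) : {Y | X ⋖ Y}.Finite := by
  let box := range (X.card + 1) ×ˢ range (X.card + 1)
  refine ((box.image (insert · X.cells)).finite_toSet.preimage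
    (fun _ _ _ _ h => YoungDiagram.ext h)).subset fun Y hY => ?_
  obtain ⟨c, hc, hY'⟩ := covBy_iff_exists_insert.1 hY
  have hcard : Y.card = X.card + 1 := by
    rw [YoungDiagram.card, hY', card_insert_of_notMem hc]
  have hcY : c ∈ Y := by rw [← mem_cells, hY']; exact mem_insert_self _ _
  have := fst_lt_card_and_snd_lt_card hcY
  exact mem_image.2 ⟨c, by simp [box]; omega, hY'.symm⟩

noncomputable instance (Y : YoungDiagram) : Fintype {X | X ⋖ Y} := (finite_lowerCovers Y).fintype

noncomputable instance (X : YoungDiagram) : Fintype {Y | X ⋖ Y} := (finite_upperCovers X).fintype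

theorem mem_of_le_of_cells_eq_insert {X Y : YoungDiagram} {c d : ℕ × ℕ}
    (hY : Y.cells = insert c X.cells) (hdc : d ≤ c) (hne : d ≠ c) : d ∈ X := by
  have hcY : c ∈ Y.cells := hY ▸ mem_insert_self c X.cells
  have := Y.isLowerSet hdc hcY
  rw [mem_coe, hY, mem_insert] at this
  exact this.resolve_left hne

theorem fst_eq_colLen_of_cells_eq_insert {X Y : YoungDiagram} {c : ℕ × ℕ} (hc : c ∉ X)
    (hY : Y.cells = insert c X.cells) : c.1 = X.colLen c.2 := by
  have hle : X.colLen c.2 ≤ c.1 := not_lt.1 fun h => hc (mem_iff_lt_colLen.2 h)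
  rcases Nat.eq_zero_or_pos c.1 with h0 | h0
  · omega
  · have := mem_iff_lt_colLen.1 (mem_of_le_of_cells_eq_insert hY
      (d := (c.1 - 1, c.2)) ⟨by simp, le_rfl⟩ (by simp [Prod.ext_iff]; omega))
    omega

theorem colLen_lt_of_cells_eq_insert {X Y : YoungDiagram} {c : ℕ × ℕ} (hc : c ∉ X)
    (hY : Y.cells = insert c X.cells) {j : ℕ} (hj : c.2 = j + 1) :
    X.colLen (j + 1) < X.colLen j := by
  have := mem_iff_lt_colLen.1 (mem_of_le_of_cells_eq_insert hY
    (d := (c.1, j)) ⟨le_rfl, by simp [hj]⟩ (by simp [Prod.ext_iff]; omega))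
  rw [← hj, ← fst_eq_colLen_of_cells_eq_insert hc hY]
  exact this

theorem exists_covBy_cells_eq_erase {X : YoungDiagram} {j : ℕ}
    (hj : X.colLen (j + 1) < X.colLen j) :
    ∃ W, W ⋖ X ∧ W.cells = X.cells.erase (X.colLen j - 1, j) := by
  set d := (X.colLen j - 1, j)
  have hd : d ∈ X := mem_iff_lt_colLen.2 (by omega)
  have hmax : ∀ e ∈ (X.cells : Set (ℕ × ℕ)), d ≤ e → e = d := by
    rintro ⟨a, b⟩ he ⟨ha, hb⟩
    have hb' : b = j := by
      by_contra hne
      have := mem_iff_lt_colLen.1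
        (X.up_left_mem le_rfl (show j + 1 ≤ b by simp [d] at hb; omega) he)
      simp [d] at ha; omega
    subst hb'
    have := mem_iff_lt_colLen.1 he
    simp [d] at ha ⊢; omega
  let W : YoungDiagram := ⟨X.cells.erase d, by rw [coe_erase]; exact X.isLowerSet.erase hmax⟩
  refine ⟨W, covBy_iff_exists_insert.2 ⟨d, by simp [W], ?_⟩, rfl⟩
  exact (insert_erase ((mem_cells d).2 hd)).symm

theorem card_upperCovers_le (X : YoungDiagram) :
    Fintype.card {Y | X ⋖ Y} ≤ Fintype.card {W | W ⋖ X} + 1 := by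
  choose! c hcX hcY using fun Y (h : X ⋖ Y) => covBy_iff_exists_insert.1 h
  have hW (j : ℕ) : ∃ W, X.colLen (j + 1) < X.colLen j →
      W ⋖ X ∧ W.cells = X.cells.erase (X.colLen j - 1, j) := by
    by_cases hj : X.colLen (j + 1) < X.colLen j
    · exact (exists_covBy_cells_eq_erase hj).imp fun _ h _ => h
    · exact ⟨⊥, fun h => absurd h hj⟩
  choose W hW using hW
  have hcol {Y Y'} (hY : X ⋖ Y) (hY' : X ⋖ Y') (h : (c Y).2 = (c Y').2) : Y = Y' := by
    have : c Y = c Y' := Prod.ext (by rw [fst_eq_colLen_of_cells_eq_insert (hcX Y hY) (hcY Y hY),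
      fst_eq_colLen_of_cells_eq_insert (hcX Y' hY') (hcY Y' hY'), h]) h
    exact YoungDiagram.ext (by rw [hcY Y hY, hcY Y' hY', this])
  -- adding a cell in column `j + 1` needs a corner at the bottom of column `j`
  have hlt {Y} (hY : X ⋖ Y) (h : (c Y).2 ≠ 0) :
      X.colLen ((c Y).2 - 1 + 1) < X.colLen ((c Y).2 - 1) :=
    colLen_lt_of_cells_eq_insert (hcX Y hY) (hcY Y hY) (by omega)
  rw [← Set.toFinset_card, ← Set.toFinset_card, ← card_insertNone]
  refine card_le_card_of_injOn (fun Y => if (c Y).2 = 0 then none else some (W ((c Y).2 - 1)))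
    (fun Y hY => ?_) (fun Y hY Y' hY' h => ?_)
  · simp only [Set.coe_toFinset, Set.mem_ofPred_eq] at hY ⊢
    split_ifs with h
    · simp
    · simp [(hW _ (hlt hY h)).1]
  · simp only [Set.coe_toFinset, Set.mem_ofPred_eq] at hY hY'
    simp only at h
    split_ifs at h with h1 h2 h2
    · exact hcol hY hY' (h1.trans h2.symm)
    · have hcells := congrArg cells (Option.some_inj.1 h)
      rw [(hW _ (hlt hY h1)).2, (hW _ (hlt hY' h2)).2] at hcells
      have := erase_injOn X.cells (mem_iff_lt_colLen.2 (by have := hlt hY h1; omega))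
        (mem_iff_lt_colLen.2 (by have := hlt hY' h2; omega)) hcells
      exact hcol hY hY' (by simp only [Prod.ext_iff] at this; omega)

noncomputable def tail (μ : YoungDiagram) : YoungDiagram where
  cells := μ.cells.preimage (fun c => (c.1 + 1, c.2)) <|
    Function.Injective.injOn fun a b h => by simpa [Prod.ext_iff] using h
  isLowerSet a b hba ha := by
    rw [mem_coe, mem_preimage] at ha ⊢
    exact μ.isLowerSet (show (b.1 + 1, b.2) ≤ (a.1 + 1, a.2) from ⟨by simp [hba.1], hba.2⟩) ha

@[simp]
theorem mem_tail {μ : YoungDiagram} {c : ℕ × ℕ} : c ∈ μ.tail ↔ (c.1 + 1, c.2) ∈ μ := by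
  rw [← mem_cells, tail, mem_preimage, mem_cells]

@[simp]
theorem tail_bot : (⊥ : YoungDiagram).tail = ⊥ := by
  ext c; simp

@[simp]
theorem rowLen_bot (i : ℕ) : (⊥ : YoungDiagram).rowLen i = 0 := by
  by_contra h
  exact notMem_bot (i, 0) (mem_iff_lt_rowLen.2 (Nat.pos_of_ne_zero h))

theorem eq_of_rowLen_zero_eq_of_tail_eq {μ ν : YoungDiagram} (h0 : μ.rowLen 0 = ν.rowLen 0)
    (ht : μ.tail = ν.tail) : μ = ν := by
  ext ⟨i, j⟩
  rw [mem_cells, mem_cells]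
  cases i with
  | zero => rw [mem_iff_lt_rowLen, mem_iff_lt_rowLen, h0]
  | succ i => rw [← mem_tail (c := (i, j)), ← mem_tail (c := (i, j)), ht]

theorem covBy_cases_tail {X Y : YoungDiagram} (h : X ⋖ Y) :
    (X.rowLen 0 + 1 = Y.rowLen 0 ∧ X.tail = Y.tail) ∨
      (X.rowLen 0 = Y.rowLen 0 ∧ X.tail ⋖ Y.tail) := by
  obtain ⟨c, hc, hY⟩ := covBy_iff_exists_insert.1 h
  have hmem (d : ℕ × ℕ) : d ∈ Y ↔ d = c ∨ d ∈ X := by rw [← mem_cells, hY, mem_insert, mem_cells]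
  have hrow : Y.row 0 = if c.1 = 0 then insert c (X.row 0) else X.row 0 := by
    rw [row, hY, filter_insert]; rfl
  simp only [rowLen_eq_card, hrow]
  by_cases hc0 : c.1 = 0
  · left
    rw [if_pos hc0, card_insert_of_notMem fun h => hc (mem_row_iff.1 h).1]
    refine ⟨rfl, ?_⟩
    ext d
    have hd : (d.1 + 1, d.2) ≠ c := fun h => by simp [← h] at hc0
    simp [hmem, hd]
  · right
    rw [if_neg hc0]
    refine ⟨rfl, covBy_iff_exists_insert.2 ⟨(c.1 - 1, c.2), ?_, ?_⟩⟩
    · rw [mem_tail, Nat.sub_add_cancel (Nat.pos_of_ne_zero hc0)]; exact hc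
    · ext d
      have hd : (d.1 + 1, d.2) = c ↔ d = (c.1 - 1, c.2) := by simp only [Prod.ext_iff]; omega
      simp [hmem, hd]

theorem sum_lowerCovers_rowLen_eq_le (f : YoungDiagram → ℕ) (Y : YoungDiagram) :
    ∑ X ∈ {X ∈ {X | X ⋖ Y}.toFinset | X.rowLen 0 = Y.rowLen 0}, f X.tail ≤
      ∑ T ∈ {T | T ⋖ Y.tail}.toFinset, f T := by
  rw [← sum_image fun X hX X' hX' h => eq_of_rowLen_zero_eq_of_tail_eq
    (((mem_filter.1 hX).2).trans (mem_filter.1 hX').2.symm) h]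
  refine sum_le_sum_of_subset (image_subset_iff.2 fun X hX => ?_)
  simp only [mem_filter, Set.mem_toFinset] at hX
  rcases covBy_cases_tail hX.1 with h | h
  · omega
  · exact Set.mem_toFinset.2 h.2

theorem card_lowerCovers_rowLen_ne_le_one (Y : YoungDiagram) :
    #{X ∈ {X | X ⋖ Y}.toFinset | X.rowLen 0 ≠ Y.rowLen 0} ≤ 1 := by
  refine card_le_one.2 fun X hX X' hX' => ?_
  simp only [mem_filter, Set.mem_toFinset] at hX hX'
  rcases covBy_cases_tail hX.1 with h | h <;> rcases covBy_cases_tail hX'.1 with h' | h'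
  all_goals first
    | exact eq_of_rowLen_zero_eq_of_tail_eq (by omega) (h.2.trans h'.2.symm)
    | omega

theorem sum_numChains_lowerCovers_rowLen_eq_le {n : ℕ} (ih : ∀ X : YoungDiagram,
      numChains n X ≤ n.choose (X.rowLen 0) * numChains (n - X.rowLen 0) X.tail)
    (Y : YoungDiagram) :
    ∑ X ∈ {X ∈ {X | X ⋖ Y}.toFinset | X.rowLen 0 = Y.rowLen 0}, numChains n X ≤
      n.choose (Y.rowLen 0) * numChains (n + 1 - Y.rowLen 0) Y.tail := by
  set r := Y.rowLen 0
  calc _ ≤ ∑ X ∈ {X ∈ {X | X ⋖ Y}.toFinset | X.rowLen 0 = r},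
          n.choose r * numChains (n - r) X.tail :=
        sum_le_sum fun X hX => (mem_filter.1 hX).2 ▸ ih X
    _ ≤ n.choose r * numChains (n - r + 1) Y.tail := by
        rw [← mul_sum, numChains_succ]
        exact Nat.mul_le_mul_left _ (sum_lowerCovers_rowLen_eq_le _ Y)
    _ = n.choose r * numChains (n + 1 - r) Y.tail := by
        rcases le_or_gt r n with h | h
        · rw [Nat.sub_add_comm h]
        · simp [Nat.choose_eq_zero_of_lt h]

theorem sum_numChains_lowerCovers_rowLen_ne_le {n : ℕ} (ih : ∀ X : YoungDiagram,
      numChains n X ≤ n.choose (X.rowLen 0) * numChains (n - X.rowLen 0) X.tail)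
    (Y : YoungDiagram) :
    ∑ X ∈ {X ∈ {X | X ⋖ Y}.toFinset | X.rowLen 0 ≠ Y.rowLen 0}, numChains n X ≤
      n.choose (Y.rowLen 0 - 1) * numChains (n + 1 - Y.rowLen 0) Y.tail := by
  calc _ ≤ ∑ X ∈ {X ∈ {X | X ⋖ Y}.toFinset | X.rowLen 0 ≠ Y.rowLen 0},
          n.choose (Y.rowLen 0 - 1) * numChains (n + 1 - Y.rowLen 0) Y.tail := by
        refine sum_le_sum fun X hX => ?_
        simp only [mem_filter, Set.mem_toFinset] at hX
        rcases covBy_cases_tail hX.1 with h | h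
        · rw [← h.1, ← h.2, Nat.add_sub_cancel, Nat.add_sub_add_right]
          exact ih X
        · exact absurd h.1 hX.2
    _ ≤ n.choose (Y.rowLen 0 - 1) * numChains (n + 1 - Y.rowLen 0) Y.tail := by
        rw [sum_const, smul_eq_mul]
        exact mul_le_of_le_one_left (Nat.zero_le _) (card_lowerCovers_rowLen_ne_le_one Y)

theorem numChains_le_choose_mul_numChains_tail (n : ℕ) (Y : YoungDiagram) :
    numChains n Y ≤ n.choose (Y.rowLen 0) * numChains (n - Y.rowLen 0) Y.tail := by
  induction n generalizing Y with
  | zero =>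
    rw [numChains_zero]
    split_ifs with h
    · rw [h, rowLen_bot, tail_bot, numChains_zero, if_pos rfl, Nat.choose_self]
    · exact Nat.zero_le _
  | succ n ih =>
    rw [numChains_succ, ← sum_filter_add_sum_filter_not _ (fun X => X.rowLen 0 = Y.rowLen 0)]
    have hrow := sum_numChains_lowerCovers_rowLen_eq_le ih Y
    rcases Nat.eq_zero_or_pos (Y.rowLen 0) with hY | hY
    · have hempty :
          ∑ X ∈ {X | X ⋖ Y}.toFinset with ¬X.rowLen 0 = Y.rowLen 0, numChains n X = 0 :=
        sum_eq_zero fun X hX => by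
          simp only [mem_filter, Set.mem_toFinset] at hX
          rcases covBy_cases_tail hX.1 with h | h <;> omega
      rw [hempty, add_zero]
      simpa [hY] using hrow
    · have hfirst := sum_numChains_lowerCovers_rowLen_ne_le ih Y
      have hpascal : (n + 1).choose (Y.rowLen 0) =
          n.choose (Y.rowLen 0) + n.choose (Y.rowLen 0 - 1) := by
        rw [← Nat.succ_pred_eq_of_pos hY, Nat.choose_succ_succ', add_comm]; simp
      rw [hpascal, add_mul]
      exact add_le_add hrow hfirst

theorem monotone_of_rows_cols {μ : YoungDiagram} {β : Type*} [Preorder β] {f : μ.cells → β}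
    (hrow : ∀ a b : μ.cells, (a : ℕ × ℕ).1 = (b : ℕ × ℕ).1 → (a : ℕ × ℕ).2 < (b : ℕ × ℕ).2 →
      f a < f b)
    (hcol : ∀ a b : μ.cells, (a : ℕ × ℕ).2 = (b : ℕ × ℕ).2 → (a : ℕ × ℕ).1 < (b : ℕ × ℕ).1 →
      f a < f b) :
    Monotone f := by
  rintro ⟨⟨i, j⟩, ha⟩ ⟨⟨i', j'⟩, hb⟩ ⟨hi, hj⟩
  let m : μ.cells := ⟨(i, j'), μ.isLowerSet (show (i, j') ≤ (i', j') from ⟨hi, le_rfl⟩) hb⟩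
  have h1 : f ⟨(i, j), ha⟩ ≤ f m := by
    rcases hj.lt_or_eq with hj | rfl
    · exact (hrow ⟨(i, j), ha⟩ m rfl hj).le
    · exact le_rfl
  have h2 : f m ≤ f ⟨(i', j'), hb⟩ := by
    rcases hi.lt_or_eq with hi | rfl
    · exact (hcol m ⟨(i', j'), hb⟩ rfl hi).le
    · exact le_rfl
  exact h1.trans h2

def sublevel (μ : YoungDiagram) (f : μ.cells → ℕ) (hf : Monotone f) (k : ℕ) : YoungDiagram where
  cells := ({c | f c < k} : Finset μ.cells).map (Function.Embedding.subtype _)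
  isLowerSet a b hba ha := by
    simp only [coe_map, Function.Embedding.coe_subtype, Set.mem_image, mem_coe, mem_filter,
      mem_univ, true_and, Subtype.exists, exists_and_right, exists_eq_right] at ha ⊢
    obtain ⟨ha, hfa⟩ := ha
    exact ⟨μ.isLowerSet hba ha, (hf hba).trans_lt hfa⟩

theorem mem_sublevel {μ : YoungDiagram} {f : μ.cells → ℕ} {hf : Monotone f} {k : ℕ}
    {c : ℕ × ℕ} : c ∈ μ.sublevel f hf k ↔ ∃ h : c ∈ μ.cells, f ⟨c, h⟩ < k := by
  rw [← mem_cells, sublevel]; simp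

theorem sublevel_covBy {μ : YoungDiagram} (f : μ.cells ≃ Fin μ.card)
    (hf : Monotone fun c => (f c : ℕ)) {k : ℕ} (hk : k < μ.card) :
    μ.sublevel _ hf k ⋖ μ.sublevel _ hf (k + 1) := by
  set c := f.symm ⟨k, hk⟩
  have hfc (d : μ.cells) : (f d : ℕ) = k ↔ d = c := by
    rw [Equiv.eq_symm_apply, Fin.ext_iff]
  refine covBy_iff_exists_insert.2 ⟨c, fun h => ?_, ?_⟩
  · obtain ⟨_, h⟩ := mem_sublevel.1 h
    exact h.ne ((hfc c).2 rfl)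
  · ext d
    simp only [mem_insert, mem_cells, mem_sublevel, Nat.lt_succ_iff_lt_or_eq]
    constructor
    · rintro ⟨hd, hd' | hd'⟩
      · exact Or.inr ⟨hd, hd'⟩
      · exact Or.inl (congrArg Subtype.val ((hfc ⟨d, hd⟩).1 hd'))
    · rintro (rfl | ⟨hd, hd'⟩)
      · exact ⟨c.2, Or.inr ((hfc c).2 rfl)⟩
      · exact ⟨hd, Or.inl hd'⟩

theorem sytCard_le_numChains (μ : YoungDiagram) : sytCard μ ≤ numChains μ.card μ := by
  have hmono (f : μ.cells ≃ Fin μ.card) (hf : _ ∧ _) : Monotone fun c => (f c : ℕ) :=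
    Fin.val_strictMono.monotone.comp (monotone_of_rows_cols hf.1 hf.2)
  have hle {f g : μ.cells ≃ Fin μ.card} (hf : Monotone fun c => (f c : ℕ))
      (hg : Monotone fun c => (g c : ℕ))
      (h : ∀ k ≤ μ.card, μ.sublevel _ hf k = μ.sublevel _ hg k) (c : μ.cells) :
      (g c : ℕ) ≤ f c := by
    have hc : (c : ℕ × ℕ) ∈ μ.sublevel _ hf (f c + 1) := mem_sublevel.2 ⟨c.2, Nat.lt_succ_self _⟩
    rw [h _ (f c).2] at hc
    obtain ⟨_, hc⟩ := mem_sublevel.1 hc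
    exact Nat.lt_succ_iff.1 hc
  refine card_le_numChains (fun σ k => μ.sublevel _ (hmono σ.1 σ.2) k) (fun σ => ?_)
    (fun σ k hk => sublevel_covBy σ.1 _ hk) (fun σ => ?_) (fun σ τ h => ?_)
  · ext c; simp [mem_sublevel]
  · ext c; simp only [mem_cells, mem_sublevel]; exact ⟨fun ⟨h, _⟩ => h, fun h => ⟨h, (σ.1 _).2⟩⟩
  · exact Subtype.ext (Equiv.ext fun c => Fin.ext
      (le_antisymm (hle _ _ (fun k hk => (h k hk).symm) c) (hle _ _ h c)))

theorem card_ofRowLens (w : List ℕ) (hw : w.SortedGE) : (ofRowLens w hw).card = w.sum := by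
  change (YoungDiagram.cellsOfRowLens w).card = w.sum
  clear hw
  induction w with
  | nil => rfl
  | cons a w ih =>
    rw [YoungDiagram.cellsOfRowLens, card_union_of_disjoint, card_product, card_singleton,
      card_range, card_map, ih, List.sum_cons, one_mul]
    refine disjoint_left.2 fun c h1 h2 => ?_
    simp only [mem_product, mem_singleton, mem_map] at h1 h2
    obtain ⟨d, -, rfl⟩ := h2
    simp at h1

theorem rowLen_zero_ofRowLens (w : List ℕ) (hw : w.SortedGE) :
    (ofRowLens w hw).rowLen 0 = w.headI := by
  cases w with
  | nil =>
    refine Nat.eq_zero_of_not_pos fun h => ?_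
    simpa [mem_ofRowLens] using mem_iff_lt_rowLen.2 h
  | cons a w => exact rowLen_ofRowLens (w := a :: w) ⟨0, by simp⟩

end YoungDiagram

open YoungDiagram

theorem card_toYD {n : ℕ} (p : n.Partition) : (toYD p).card = n := by
  rw [toYD, card_ofRowLens, ← Multiset.sum_coe, Multiset.sort_eq, p.parts_sum]

theorem rowLen_zero_toYD {n : ℕ} (p : n.Partition) : (toYD p).rowLen 0 = firstPart p :=
  rowLen_zero_ofRowLens _ _

theorem toYD_injective {n : ℕ} : Function.Injective (toYD (n := n)) := by
  have hrowLens (p : n.Partition) : (toYD p).rowLens = p.parts.sort (· ≥ ·) :=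
    rowLens_ofRowLens_eq_self fun x hx => p.parts_pos ((Multiset.mem_sort _).1 hx)
  intro p q h
  rw [Nat.Partition.ext_iff, ← Multiset.sort_eq p.parts (· ≥ ·), ← Multiset.sort_eq q.parts (· ≥ ·),
    ← hrowLens, ← hrowLens, h]

/-- For partitions of `n` with fixed first part `λ₁`, the sum of squared dimensions
satisfies `∑ d_λ² ≤ C(n,λ₁)² (n−λ₁)!`. -/
theorem stmt10 (n l1 : ℕ) :
    ∑ p ∈ Finset.univ.filter (fun p : Nat.Partition n => firstPart p = l1),
      (sytCard (toYD p)) ^ 2 ≤ (n.choose l1) ^ 2 * (n - l1).factorial := by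
  set s := Finset.univ.filter (fun p : Nat.Partition n => firstPart p = l1)
  have hrow {p} (hp : p ∈ s) : (toYD p).rowLen 0 = l1 := by
    rw [rowLen_zero_toYD, (mem_filter.1 hp).2]
  have hbound {p} (hp : p ∈ s) :
      sytCard (toYD p) ≤ n.choose l1 * numChains (n - l1) (toYD p).tail := by
    have := (sytCard_le_numChains (toYD p)).trans (numChains_le_choose_mul_numChains_tail _ _)
    rwa [card_toYD, hrow hp] at this
  have hinj : Set.InjOn (fun p => (toYD p).tail) s := fun p hp q hq h =>
    toYD_injective (eq_of_rowLen_zero_eq_of_tail_eq ((hrow hp).trans (hrow hq).symm) h)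
  calc ∑ p ∈ s, sytCard (toYD p) ^ 2
      ≤ ∑ p ∈ s, (n.choose l1 * numChains (n - l1) (toYD p).tail) ^ 2 :=
        sum_le_sum fun p hp => Nat.pow_le_pow_left (hbound hp) 2
    _ = n.choose l1 ^ 2 * ∑ T ∈ s.image fun p => (toYD p).tail, numChains (n - l1) T ^ 2 := by
        rw [sum_image hinj, mul_sum]; simp only [mul_pow]
    _ ≤ n.choose l1 ^ 2 * (n - l1).factorial :=
        Nat.mul_le_mul_left _ (sum_sq_numChains_le_factorial card_upperCovers_le _ _)
end

section
/- For a finite group G, a class-symmetric probability measure μ with μ(g)=μ(g^{-1}), and the uniform distribution π, the total variation distance satisfies ‖μ − π‖_TV² ≤ (1/4) Σ over nontrivial irreducible representations λ of d_λ · tr(μ̂(λ) μ̂(λ)^T), via Plancherel's formula and Cauchy–Schwarz. -/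
/-!
Put `f = μ - 1/|G|`. Cauchy–Schwarz gives `(∑ |f|)² ≤ |G| ∑ f²`, so it suffices to show that
`∑_{λ ≠ triv} d_λ tr(μ̂(λ) μ̂(λ)ᵀ) = |G| ∑ f²`. For a nontrivial irreducible `λ` the orthogonality relations
against the trivial representation give `∑_g λ(g) = 0`, so `μ̂(λ) = f̂(λ)`, while `f̂(triv) = 0`.
Since `f` is a class function, Schur's lemma makes every `f̂(λ)` scalar, hence symmetric, and since
`f(g⁻¹) = f(g)` Plancherel's formula `∑_λ d_λ tr(f̂(λ) f̂'(λ)) = |G| ∑_g f(g) f'(g⁻¹)` applies.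
Plancherel reduces to `∑_λ d_λ tr λ(x) = |G| [x = 1]`, which is Fourier inversion for the
delta function: the orthogonality relations give a right inverse of `f ↦ (f̂(λ))_λ`, and
`∑_λ d_λ² = |G|` makes that map bijective.
-/

open Finset Matrix

namespace MatrixRep

variable {G K m n : Type*} [Group G] [Fintype m] [Fintype n] [DecidableEq m] [DecidableEq n]

def IsIrreducible [Semiring K] (ρ : G →* Matrix n n K) : Prop :=
  ∀ W : Submodule K (n → K), (∀ g, ∀ v ∈ W, ρ g *ᵥ v ∈ W) → W = ⊥ ∨ W = ⊤

def NoNonzeroIntertwiner [Semiring K] (ρ₁ : G →* Matrix m m K) (ρ₂ : G →* Matrix n n K) :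
    Prop :=
  ¬∃ M : Matrix m n K, M ≠ 0 ∧ ∀ g, ρ₁ g * M = M * ρ₂ g

section CommRing

variable [CommRing K]

theorem trace_conj_eq (ρ : G →* Matrix n n K) (X : Matrix n n K) (g : G) :
    trace (ρ g * X * ρ g⁻¹) = trace X := by
  rw [trace_mul_cycle, ← map_mul, inv_mul_cancel, map_one, Matrix.one_mul]

theorem mul_single_one_mul_apply (A : Matrix m m K)
    (B : Matrix n n K) (a b : m) (c e : n) :
    (A * single b c (1 : K) * B) a e = A a b * B c e := by
  simp [mul_apply, single_apply, ite_and, Finset.sum_ite_eq]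

variable [Fintype G]

theorem mul_sum_mul_mul_inv (ρ₁ : G →* Matrix m m K) (ρ₂ : G →* Matrix n n K)
    (X : Matrix m n K) (h : G) :
    ρ₁ h * ∑ g, ρ₁ g * X * ρ₂ g⁻¹ = (∑ g, ρ₁ g * X * ρ₂ g⁻¹) * ρ₂ h := by
  rw [Matrix.mul_sum, Matrix.sum_mul]
  refine Fintype.sum_equiv (Equiv.mulLeft h) _ _ fun g => ?_
  have hinv : ρ₂ (h * g)⁻¹ * ρ₂ h = ρ₂ g⁻¹ := by rw [← map_mul]; group
  simp only [Equiv.coe_mulLeft, map_mul, Matrix.mul_assoc, hinv]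

theorem sum_apply_mul_inv_apply_eq_zero
    {ρ₁ : G →* Matrix m m K} {ρ₂ : G →* Matrix n n K} (h : NoNonzeroIntertwiner ρ₁ ρ₂)
    (a b : m) (c e : n) : ∑ g, ρ₁ g a b * ρ₂ g⁻¹ c e = 0 := by
  have hT : ∑ g, ρ₁ g * single b c (1 : K) * ρ₂ g⁻¹ = 0 := by
    by_contra hne
    exact h ⟨_, hne, mul_sum_mul_mul_inv ρ₁ ρ₂ _⟩
  simpa [Matrix.sum_apply, mul_single_one_mul_apply] using congrFun (congrFun hT a) e

theorem sum_eq_zero_of_noNonzeroIntertwiner_trivial [Nonempty n]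
    {ρ : G →* Matrix m m K} {ρ₀ : G →* Matrix n n K} (h₀ : ∀ g, ρ₀ g = 1)
    (h : NoNonzeroIntertwiner ρ ρ₀) : ∑ g, ρ g = 0 := by
  ext a b
  obtain ⟨c⟩ := ‹Nonempty n›
  simpa [h₀, Matrix.sum_apply] using sum_apply_mul_inv_apply_eq_zero h a b c c

theorem sum_trace_inv_mul_smul_apply (ρ₁ : G →* Matrix m m K) (ρ₂ : G →* Matrix n n K)
    (M : Matrix m m K) (c e : n) :
    (∑ g, trace (ρ₁ g⁻¹ * M) • ρ₂ g) c e = ∑ a, ∑ b, M b a * ∑ g, ρ₂ g c e * ρ₁ g⁻¹ a b := by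
  simp only [Matrix.sum_apply, Matrix.smul_apply, smul_eq_mul, trace, diag_apply, mul_apply,
    Finset.sum_mul, Finset.mul_sum]
  rw [Finset.sum_comm]
  refine Finset.sum_congr rfl fun a _ => ?_
  rw [Finset.sum_comm]
  exact Finset.sum_congr rfl fun b _ => Finset.sum_congr rfl fun g _ => by ring

theorem sum_trace_inv_mul_smul_eq_zero
    {ρ₁ : G →* Matrix m m K} {ρ₂ : G →* Matrix n n K} (h : NoNonzeroIntertwiner ρ₂ ρ₁)
    (M : Matrix m m K) : ∑ g, trace (ρ₁ g⁻¹ * M) • ρ₂ g = 0 := by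
  ext c e
  simp [sum_trace_inv_mul_smul_apply, sum_apply_mul_inv_apply_eq_zero h]

theorem mul_sum_smul_of_conj_invariant (ρ : G →* Matrix n n K) {f : G → K}
    (hf : ∀ g h, f (h * g * h⁻¹) = f g) (h : G) :
    ρ h * ∑ g, f g • ρ g = (∑ g, f g • ρ g) * ρ h := by
  rw [Matrix.mul_sum, Matrix.sum_mul]
  refine Fintype.sum_equiv ((Equiv.mulLeft h).trans (Equiv.mulRight h⁻¹)) _ _ fun g => ?_
  simp only [Equiv.trans_apply, Equiv.coe_mulLeft, Equiv.coe_mulRight, Matrix.mul_smul,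
    Matrix.smul_mul, hf, ← map_mul, inv_mul_cancel_right]

def fourierTransform {ι : Type*} (d : ι → ℕ) (ρ : ∀ i, G →* Matrix (Fin (d i)) (Fin (d i)) K) :
    (G → K) →ₗ[K] ∀ i, Matrix (Fin (d i)) (Fin (d i)) K :=
  LinearMap.pi fun i => Fintype.linearCombination K (ρ i)

theorem fourierTransform_apply {ι : Type*} (d : ι → ℕ)
    (ρ : ∀ i, G →* Matrix (Fin (d i)) (Fin (d i)) K) (f : G → K) (i : ι) :
    fourierTransform d ρ f i = ∑ g, f g • ρ i g :=
  Fintype.linearCombination_apply K (ρ i) f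

end CommRing

section Schur

variable [Field K] [IsAlgClosed K]

theorem eq_smul_one_of_commute {ρ : G →* Matrix n n K} (hρ : IsIrreducible ρ)
    {T : Matrix n n K} (hT : ∀ g, ρ g * T = T * ρ g) : ∃ c : K, T = c • 1 := by
  cases isEmpty_or_nonempty n
  · exact ⟨0, Subsingleton.elim _ _⟩
  obtain ⟨c, hc⟩ := Module.End.exists_eigenvalue (toLin' T)
  refine ⟨c, ?_⟩
  have hW : ∀ g, ∀ v ∈ LinearMap.ker (toLin' (T - c • 1)), ρ g *ᵥ v ∈
      LinearMap.ker (toLin' (T - c • 1)) := by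
    intro g v hv
    have hcomm : (T - c • 1) * ρ g = ρ g * (T - c • 1) := by
      rw [sub_mul, Matrix.mul_sub, hT, smul_mul, Matrix.mul_smul, Matrix.one_mul, Matrix.mul_one]
    simp only [LinearMap.mem_ker, toLin'_apply] at hv ⊢
    rw [mulVec_mulVec, hcomm, ← mulVec_mulVec, hv, mulVec_zero]
  obtain ⟨v, hv⟩ := hc.exists_hasEigenvector
  rcases hρ _ hW with hbot | htop
  · refine absurd ?_ hv.2
    rw [← Submodule.mem_bot K, ← hbot, LinearMap.mem_ker, map_sub, LinearMap.sub_apply,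
      sub_eq_zero]
    simpa [Module.End.mem_eigenspace_iff] using hv.1
  · rw [← sub_eq_zero, ← toLin'.map_eq_zero_iff, ← LinearMap.ker_eq_top, htop]

theorem transpose_sum_smul_of_conj_invariant [Fintype G] {ρ : G →* Matrix n n K}
    (hρ : IsIrreducible ρ) {f : G → K} (hf : ∀ g h, f (h * g * h⁻¹) = f g) :
    (∑ g, f g • ρ g)ᵀ = ∑ g, f g • ρ g := by
  obtain ⟨c, hc⟩ := eq_smul_one_of_commute hρ (mul_sum_smul_of_conj_invariant ρ hf)
  rw [hc, transpose_smul, transpose_one]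

end Schur

section Orthogonality

variable [Field K] [IsAlgClosed K] [CharZero K] [Fintype G]

theorem sum_apply_mul_inv_apply {ρ : G →* Matrix n n K} (hρ : IsIrreducible ρ) (a b c e : n) :
    ∑ g, ρ g a b * ρ g⁻¹ c e =
      if b = c ∧ a = e then (Fintype.card G : K) / Fintype.card n else 0 := by
  have : Nonempty n := ⟨a⟩
  have hn : (Fintype.card n : K) ≠ 0 := Nat.cast_ne_zero.2 Fintype.card_ne_zero
  obtain ⟨s, hs⟩ := eq_smul_one_of_commute hρ (mul_sum_mul_mul_inv ρ ρ (single b c 1))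
  have htrace : s * Fintype.card n = Fintype.card G * if b = c then 1 else 0 := by
    have htr := congrArg trace hs
    rw [trace_sum] at htr
    simp only [trace_conj_eq, trace_smul, trace_one, sum_const, card_univ, smul_eq_mul] at htr
    split_ifs with hbc
    · subst hbc; simp [← htr]
    · simp [hbc, ← htr]
  have hentry : (∑ g, ρ g * single b c (1 : K) * ρ g⁻¹) a e = s * if a = e then 1 else 0 := by
    rw [hs]; simp [one_apply]
  simp only [Matrix.sum_apply, mul_single_one_mul_apply] at hentry
  rw [hentry, eq_div_of_mul_eq hn htrace]
  split_ifs <;> simp_all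

theorem sum_trace_inv_mul_smul {ρ : G →* Matrix n n K} (hρ : IsIrreducible ρ)
    (M : Matrix n n K) :
    ∑ g, trace (ρ g⁻¹ * M) • ρ g = ((Fintype.card G : K) / Fintype.card n) • M := by
  ext c e
  simp [sum_trace_inv_mul_smul_apply, sum_apply_mul_inv_apply hρ, ite_and, mul_comm]

end Orthogonality

section Fourier

variable [Field K] [IsAlgClosed K] [CharZero K] [Fintype G] {ι : Type*} [Fintype ι]
  {d : ι → ℕ} {ρ : ∀ i, G →* Matrix (Fin (d i)) (Fin (d i)) K}

theorem fourierTransform_inversion [DecidableEq ι] (hirr : ∀ i, IsIrreducible (ρ i))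
    (hnoniso : ∀ i j, i ≠ j → NoNonzeroIntertwiner (ρ i) (ρ j))
    (M : ∀ i, Matrix (Fin (d i)) (Fin (d i)) K) :
    fourierTransform d ρ
      (fun g => (Fintype.card G : K)⁻¹ * ∑ i, (d i : K) * trace (ρ i g⁻¹ * M i)) = M := by
  funext j
  have hN : (Fintype.card G : K) ≠ 0 := Nat.cast_ne_zero.2 Fintype.card_ne_zero
  rcases eq_or_ne (d j) 0 with hj | hj
  · ext a
    exact absurd a.2 (by omega)
  calc fourierTransform d ρ _ j
      = (Fintype.card G : K)⁻¹ • ∑ i, (d i : K) • ∑ g, trace (ρ i g⁻¹ * M i) • ρ j g := by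
        simp only [fourierTransform_apply, Finset.smul_sum, Finset.sum_smul, mul_smul]
        exact Finset.sum_comm
    _ = (Fintype.card G : K)⁻¹ • (d j : K) • ∑ g, trace (ρ j g⁻¹ * M j) • ρ j g := by
        rw [Finset.sum_eq_single j (fun i _ hij => by
          rw [sum_trace_inv_mul_smul_eq_zero (hnoniso j i (Ne.symm hij)), smul_zero])
          (by simp)]
    _ = M j := by
        rw [sum_trace_inv_mul_smul (hirr j), Fintype.card_fin, smul_smul, smul_smul]
        field_simp
        rw [one_smul]

theorem fourierTransform_injective [DecidableEq ι] (hirr : ∀ i, IsIrreducible (ρ i))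
    (hnoniso : ∀ i j, i ≠ j → NoNonzeroIntertwiner (ρ i) (ρ j))
    (hcomplete : ∑ i, d i ^ 2 = Fintype.card G) :
    Function.Injective (fourierTransform d ρ) := by
  have hrank : Module.finrank K (G → K) =
      Module.finrank K (∀ i, Matrix (Fin (d i)) (Fin (d i)) K) := by
    simp [Module.finrank_pi_fintype, Module.finrank_matrix, ← hcomplete, sq]
  exact (LinearMap.injective_iff_surjective_of_finrank_eq_finrank hrank).2
    fun M => ⟨_, fourierTransform_inversion hirr hnoniso M⟩

theorem sum_dim_mul_trace [DecidableEq ι] [DecidableEq G] (hirr : ∀ i, IsIrreducible (ρ i))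
    (hnoniso : ∀ i j, i ≠ j → NoNonzeroIntertwiner (ρ i) (ρ j))
    (hcomplete : ∑ i, d i ^ 2 = Fintype.card G) (x : G) :
    ∑ i, (d i : K) * trace (ρ i x) = if x = 1 then (Fintype.card G : K) else 0 := by
  have hN : (Fintype.card G : K) ≠ 0 := Nat.cast_ne_zero.2 Fintype.card_ne_zero
  have hδ : fourierTransform d ρ (fun g => if g = 1 then 1 else 0) = fun _ => 1 := by
    funext i
    simp [fourierTransform_apply, ite_smul]
  have h := congrFun (fourierTransform_injective hirr hnoniso hcomplete
    (hδ.trans (fourierTransform_inversion hirr hnoniso fun _ => 1).symm)) x⁻¹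
  simp only [inv_eq_one, inv_inv, Matrix.mul_one] at h
  rw [eq_inv_mul_iff_mul_eq₀ hN] at h
  rw [← h, mul_ite, mul_one, mul_zero]

theorem sum_dim_mul_trace_fourierTransform_mul (hirr : ∀ i, IsIrreducible (ρ i))
    (hnoniso : ∀ i j, i ≠ j → NoNonzeroIntertwiner (ρ i) (ρ j))
    (hcomplete : ∑ i, d i ^ 2 = Fintype.card G) (f f' : G → K) :
    ∑ i, (d i : K) * trace (fourierTransform d ρ f i * fourierTransform d ρ f' i) =
      Fintype.card G * ∑ g, f g * f' g⁻¹ := by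
  classical
  have hprod : ∀ i, fourierTransform d ρ f i * fourierTransform d ρ f' i =
      ∑ g, ∑ h, (f g * f' h) • ρ i (g * h) := fun i => by
    simp only [fourierTransform_apply, Finset.sum_mul, Finset.mul_sum, smul_mul_smul_comm,
      map_mul]
    exact Finset.sum_comm
  calc ∑ i, (d i : K) * trace (fourierTransform d ρ f i * fourierTransform d ρ f' i)
      = ∑ g, ∑ h, f g * f' h * ∑ i, (d i : K) * trace (ρ i (g * h)) := by
        simp only [hprod, trace_sum, trace_smul, smul_eq_mul, Finset.mul_sum]
        rw [Finset.sum_comm]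
        refine Finset.sum_congr rfl fun g _ => ?_
        rw [Finset.sum_comm]
        exact Finset.sum_congr rfl fun h _ => Finset.sum_congr rfl fun i _ => by ring
    _ = ∑ g, ∑ h, f g * f' h * if g * h = 1 then (Fintype.card G : K) else 0 := by
        simp only [sum_dim_mul_trace hirr hnoniso hcomplete]
    _ = Fintype.card G * ∑ g, f g * f' g⁻¹ := by
        simp [mul_eq_one_iff_eq_inv', Finset.mul_sum, mul_comm]

theorem sum_dim_mul_trace_fourierTransform_mul_transpose (hirr : ∀ i, IsIrreducible (ρ i))
    (hnoniso : ∀ i j, i ≠ j → NoNonzeroIntertwiner (ρ i) (ρ j))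
    (hcomplete : ∑ i, d i ^ 2 = Fintype.card G) {f : G → K}
    (hclass : ∀ g h, f (h * g * h⁻¹) = f g) (hinv : ∀ g, f g⁻¹ = f g) :
    ∑ i, (d i : K) * trace (fourierTransform d ρ f i * (fourierTransform d ρ f i)ᵀ) =
      Fintype.card G * ∑ g, f g ^ 2 := by
  have htr : ∀ i, (fourierTransform d ρ f i)ᵀ = fourierTransform d ρ f i := fun i => by
    rw [fourierTransform_apply, transpose_sum_smul_of_conj_invariant (hirr i) hclass]
  simp only [htr, sum_dim_mul_trace_fourierTransform_mul hirr hnoniso hcomplete, hinv, sq]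

theorem sum_erase_dim_mul_trace_mul_transpose [DecidableEq ι]
    (hirr : ∀ i, IsIrreducible (ρ i)) (hnoniso : ∀ i j, i ≠ j → NoNonzeroIntertwiner (ρ i) (ρ j))
    (hcomplete : ∑ i, d i ^ 2 = Fintype.card G) {i₀ : ι} (hd₀ : 0 < d i₀)
    (htriv : ∀ g, ρ i₀ g = 1) {f : G → K} (hclass : ∀ g h, f (h * g * h⁻¹) = f g)
    (hinv : ∀ g, f g⁻¹ = f g) :
    ∑ i ∈ univ.erase i₀, (d i : K) * trace ((∑ g, f g • ρ i g) * (∑ g, f g • ρ i g)ᵀ) =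
      Fintype.card G * ∑ g, (f g - (∑ h, f h) / Fintype.card G) ^ 2 := by
  set F := fun g => f g - (∑ h, f h) / Fintype.card G
  have : Nonempty (Fin (d i₀)) := ⟨⟨0, hd₀⟩⟩
  have hF : ∀ i, i ≠ i₀ → ∑ g, f g • ρ i g = fourierTransform d ρ F i := fun i hi => by
    simp [fourierTransform_apply, F, sub_smul, Finset.sum_sub_distrib, ← Finset.smul_sum,
      sum_eq_zero_of_noNonzeroIntertwiner_trivial htriv (hnoniso i i₀ hi)]
  have hF₀ : fourierTransform d ρ F i₀ = 0 := by
    have hN : (Fintype.card G : K) ≠ 0 := Nat.cast_ne_zero.2 Fintype.card_ne_zero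
    simp [fourierTransform_apply, htriv, ← Finset.sum_smul, F, Finset.sum_sub_distrib,
      mul_div_cancel₀ _ hN]
  rw [Finset.sum_congr rfl fun i hi => by rw [hF i (Finset.ne_of_mem_erase hi)],
    Finset.sum_erase _ (by simp [hF₀])]
  exact sum_dim_mul_trace_fourierTransform_mul_transpose hirr hnoniso hcomplete
    (fun g h => by simp [F, hclass]) (fun g => by simp [F, hinv])

end Fourier

end MatrixRep

theorem stmt15_general {G : Type*} [Group G] [Fintype G]
    (μ : G → ℝ) (hsum : ∑ g : G, μ g = 1)
    (hclass : ∀ g h : G, μ (h * g * h⁻¹) = μ g) (hinv : ∀ g : G, μ g⁻¹ = μ g)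
    {ι : Type*} [Fintype ι] [DecidableEq ι] (d : ι → ℕ)
    (ρ : ∀ i, G →* Matrix (Fin (d i)) (Fin (d i)) ℂ)
    (hirr : ∀ i, ∀ W : Submodule ℂ (Fin (d i) → ℂ),
      (∀ g : G, ∀ v ∈ W, (ρ i g).mulVec v ∈ W) → W = ⊥ ∨ W = ⊤)
    (hnoniso : ∀ i j, i ≠ j →
      ¬∃ M : Matrix (Fin (d i)) (Fin (d j)) ℂ, M ≠ 0 ∧ ∀ g : G, ρ i g * M = M * ρ j g)
    (hcomplete : ∑ i, (d i) ^ 2 = Fintype.card G)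
    (i₀ : ι) (hd₀ : d i₀ = 1) (htriv : ∀ g : G, ρ i₀ g = 1) :
    ((1 : ℝ) / 2 * ∑ g : G, |μ g - 1 / (Fintype.card G : ℝ)|) ^ 2 ≤
      (1 / 4) * (∑ i ∈ Finset.univ.erase i₀, (d i : ℂ) *
        Matrix.trace ((∑ g : G, (μ g : ℂ) • ρ i g) *
          (∑ g : G, (μ g : ℂ) • ρ i g)ᵀ)).re := by
  have hplancherel := MatrixRep.sum_erase_dim_mul_trace_mul_transpose hirr hnoniso hcomplete
    (by omega : 0 < d i₀) htriv (f := fun g => (μ g : ℂ)) (by simp [hclass]) (by simp [hinv])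
  have hcs := sq_sum_le_card_mul_sum_sq (s := univ)
    (f := fun g => |μ g - 1 / (Fintype.card G : ℝ)|)
  simp only [sq_abs, card_univ] at hcs
  rw [hplancherel]
  norm_cast
  rw [hsum]
  nlinarith [hcs]

/-- Diaconis–Shahshahani upper bound lemma: for a class-symmetric probability measure
`μ` with `μ(g)=μ(g⁻¹)` on a finite group `G` and the uniform distribution `π`,
`‖μ − π‖_TV² ≤ (1/4) ∑_{λ ≠ triv} d_λ tr(μ̂(λ) μ̂(λ)ᵀ)`, where the sum runs over a
complete family `(ρ i)_{i : ι}` of pairwise non-isomorphic irreducible matrix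
representations of `G`, with `i₀` indexing the trivial one. -/
theorem stmt15 {G : Type*} [Group G] [Fintype G]
    (μ : G → ℝ) (hnonneg : ∀ g, 0 ≤ μ g) (hsum : ∑ g : G, μ g = 1)
    (hclass : ∀ g h : G, μ (h * g * h⁻¹) = μ g) (hinv : ∀ g : G, μ g⁻¹ = μ g)
    {ι : Type*} [Fintype ι] [DecidableEq ι] (d : ι → ℕ)
    (ρ : ∀ i, G →* Matrix (Fin (d i)) (Fin (d i)) ℂ)
    (hirr : ∀ i, ∀ W : Submodule ℂ (Fin (d i) → ℂ),
      (∀ g : G, ∀ v ∈ W, (ρ i g).mulVec v ∈ W) → W = ⊥ ∨ W = ⊤)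
    (hnoniso : ∀ i j, i ≠ j →
      ¬∃ M : Matrix (Fin (d i)) (Fin (d j)) ℂ, M ≠ 0 ∧ ∀ g : G, ρ i g * M = M * ρ j g)
    (hcomplete : ∑ i, (d i) ^ 2 = Fintype.card G)
    (i₀ : ι) (hd₀ : d i₀ = 1) (htriv : ∀ g : G, ρ i₀ g = 1) :
    ((1 : ℝ) / 2 * ∑ g : G, |μ g - 1 / (Fintype.card G : ℝ)|) ^ 2 ≤
      (1 / 4) * (∑ i ∈ Finset.univ.erase i₀, (d i : ℂ) *
        Matrix.trace ((∑ g : G, (μ g : ℂ) • ρ i g) *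
          (∑ g : G, (μ g : ℂ) • ρ i g)ᵀ)).re :=
  stmt15_general μ hsum hclass hinv d ρ hirr hnoniso hcomplete i₀ hd₀ htriv
end

section
/- Let λ^α = (αn, …, αn, rn) be the partition of n with q parts equal to αn and one part rn, where αq + r = 1, 0 ≤ r < α, and αn, rn are integers. Then the Ewens eigenvalue with θ = n satisfies β_{λ^α} ≤ ([(1+α)n]!)^q · [(1+r)n]! / ((n!)^q · (2n)!). -/
open Finset

/-!
List the cells of `λ^α` row by row: the cell `(i, j)` then comes at position `k = i a + j ≥ j`,
so `β_{λ^α}` is the product over the cells of `(n + j - i) / (n + k)`. Each factor is at most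
`(n + j + 1) / (n + k + 1)`, and the product of these is a ratio of factorials: the numerators
multiply to `((n + a)! / n!)^q (n + b)! / n!` and the denominators to `(2n)! / n!`.
-/

/-- the Ewens eigenvalue `β_λ = ∏_{i=1}^n (θ + c^λ(i))/(θ + i − 1)` of the partition
with Young diagram `Y`. -/
noncomputable def ewensEig (θ : ℝ) (n : ℕ) (Y : YoungDiagram) : ℝ :=
  (∏ b ∈ Y.cells, (θ + b.2 - b.1)) / ∏ j ∈ Finset.range n, (θ + j)

namespace YoungDiagram

theorem rowLen_eq_zero_of_colLen_le (Y : YoungDiagram) {i : ℕ} (hi : Y.colLen 0 ≤ i) :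
    Y.rowLen i = 0 := by
  by_contra h
  have : (i, 0) ∈ Y := mem_iff_lt_rowLen.2 (Nat.pos_of_ne_zero h)
  exact (mem_iff_lt_colLen.1 this).not_ge hi

theorem rowLen_eq_getD_rowLens (Y : YoungDiagram) (i : ℕ) :
    Y.rowLen i = Y.rowLens.getD i 0 := by
  rcases lt_or_ge i (Y.colLen 0) with hi | hi
  · rw [List.getD_eq_getElem _ _ (by simpa using hi), get_rowLens]
  · rw [List.getD_eq_default _ _ (by simpa using hi), Y.rowLen_eq_zero_of_colLen_le hi]

theorem prod_cells_eq_prod_range_rowLen_s19 {M : Type*} [CommMonoid M] (Y : YoungDiagram) {R : ℕ}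
    (hR : Y.colLen 0 ≤ R) (f : ℕ → ℕ → M) :
    ∏ c ∈ Y.cells, f c.1 c.2 = ∏ i ∈ range R, ∏ j ∈ range (Y.rowLen i), f i j := by
  refine prod_finset_product' _ _ _ fun c => ?_
  rw [mem_cells, mem_range, mem_range, ← mem_iff_lt_rowLen]
  refine ⟨fun hc => ⟨?_, hc⟩, And.right⟩
  exact (mem_iff_lt_colLen.1 (Y.up_left_mem le_rfl (Nat.zero_le _) hc)).trans_le hR

end YoungDiagram

def prodShape {M : Type*} [CommMonoid M] (q a b : ℕ) (f : ℕ → ℕ → M) : M :=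
  (∏ i ∈ range q, ∏ j ∈ range a, f i j) * ∏ j ∈ range b, f q j

section prodShape

variable {q a b : ℕ}

theorem prodShape_div {M : Type*} [DivisionCommMonoid M] (f g : ℕ → ℕ → M) :
    prodShape q a b (fun i j => f i j / g i j) = prodShape q a b f / prodShape q a b g := by
  simp only [prodShape, prod_div_distrib, mul_div_mul_comm]

theorem prodShape_le_prodShape {R : Type*} [CommSemiring R] [PartialOrder R] [IsOrderedRing R]
    {f g : ℕ → ℕ → R} (h0 : ∀ i ≤ q, ∀ j, 0 ≤ f i j) (h : ∀ i ≤ q, ∀ j, f i j ≤ g i j) :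
    prodShape q a b f ≤ prodShape q a b g := by
  have hlt (i) (hi : i ∈ range q) : i ≤ q := (mem_range.1 hi).le
  refine mul_le_mul ?_ ?_ (prod_nonneg fun j _ => h0 q le_rfl j) ?_
  · exact prod_le_prod (fun i hi => prod_nonneg fun j _ => h0 i (hlt i hi) j)
      fun i hi => prod_le_prod (fun j _ => h0 i (hlt i hi) j) fun j _ => h i (hlt i hi) j
  · exact prod_le_prod (fun j _ => h0 q le_rfl j) fun j _ => h q le_rfl j
  · exact prod_nonneg fun i hi => prod_nonneg fun j _ =>
      (h0 i (hlt i hi) j).trans (h i (hlt i hi) j)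

theorem prod_range_mul_add {M : Type*} [CommMonoid M] (g : ℕ → M) :
    ∏ k ∈ range (q * a + b), g k = prodShape q a b (fun i j => g (i * a + j)) := by
  rw [prodShape, prod_range_add]
  congr 1
  induction q with
  | zero => simp
  | succ q ih => rw [Nat.succ_mul, prod_range_add, ih, prod_range_succ]

theorem YoungDiagram.prod_cells_eq_prodShape {M : Type*} [CommMonoid M] {Y : YoungDiagram}
    (hY : Y.rowLens = List.replicate q a ++ (if b = 0 then [] else [b])) (f : ℕ × ℕ → M) :
    ∏ c ∈ Y.cells, f c = prodShape q a b (fun i j => f (i, j)) := by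
  have hcol : Y.colLen 0 ≤ q + 1 := by
    rw [← YoungDiagram.length_rowLens, hY]
    split_ifs <;> simp
  rw [Y.prod_cells_eq_prod_range_rowLen_s19 hcol (fun i j => f (i, j)), prod_range_succ, prodShape]
  congr 1
  · refine prod_congr rfl fun i hi => ?_
    rw [Y.rowLen_eq_getD_rowLens, hY, List.getD_append _ _ _ _ (by simpa using hi)]
    simp [mem_range.1 hi]
  · rw [Y.rowLen_eq_getD_rowLens, hY, List.getD_append_right _ _ _ _ (by simp)]
    split_ifs with h <;> simp [h]

end prodShape

theorem prod_range_natCast_add_add_one (n m : ℕ) :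
    ∏ j ∈ range m, ((n : ℝ) + j + 1) = (n + m).factorial / n.factorial := by
  rw [eq_div_iff (by positivity), ← Nat.factorial_mul_ascFactorial, Nat.ascFactorial_eq_prod_range]
  push_cast
  ring_nf

theorem sub_div_le_add_one_div_add_one {x y d : ℝ} (hd : 0 ≤ d) (hdx : d ≤ x) (hxy : x ≤ y) :
    (x - d) / y ≤ (x + 1) / (y + 1) := by
  rcases (hd.trans (hdx.trans hxy)).eq_or_lt with rfl | hy
  · rw [div_zero]
    exact div_nonneg (by linarith) (by norm_num)
  · rw [div_le_div_iff₀ hy (by positivity)]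
    nlinarith

theorem stmt19_general (n a b q : ℕ) (ha : 0 < a)
    (hsum : q * a + b = n)
    (Y : YoungDiagram)
    (hY : Y.rowLens = List.replicate q a ++ (if b = 0 then [] else [b])) :
    ewensEig (n : ℝ) n Y ≤
      (((n + a).factorial : ℝ)) ^ q * ((n + b).factorial : ℝ) /
        (((n.factorial : ℝ)) ^ q * (((2 * n).factorial : ℝ))) := by
  have hqn : q ≤ n := hsum ▸ (Nat.le_mul_of_pos_right q ha).trans (Nat.le_add_right _ _)
  have hrow_le {i : ℕ} (hi : i ≤ q) (j : ℕ) : (i : ℝ) ≤ n + j := by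
    exact_mod_cast (hi.trans hqn).trans (Nat.le_add_right n j)
  calc ewensEig n n Y
      = prodShape q a b (fun i j => ((n : ℝ) + j - i) / ((n : ℝ) + ((i * a + j : ℕ) : ℝ))) := by
        rw [ewensEig, Y.prod_cells_eq_prodShape hY, ← hsum, prod_range_mul_add, prodShape_div]
    _ ≤ prodShape q a b (fun i j => ((n : ℝ) + j + 1) / ((n : ℝ) + ((i * a + j : ℕ) : ℝ) + 1)) := by
        refine prodShape_le_prodShape (fun i hi j => ?_) fun i hi j => ?_
        · exact div_nonneg (sub_nonneg.2 (hrow_le hi j)) (by positivity)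
        · refine sub_div_le_add_one_div_add_one (Nat.cast_nonneg i) (hrow_le hi j) ?_
          gcongr
          exact Nat.le_add_left j (i * a)
    _ = _ := by
        rw [prodShape_div, ← prod_range_mul_add (fun k => (n : ℝ) + k + 1), hsum, prodShape]
        simp only [prod_const, card_range, prod_range_natCast_add_add_one, two_mul, div_pow]
        field_simp

/-- For the partition `λ^α = (αn, …, αn, rn)` of `n` with `q` parts equal to `a = αn`
and one part `b = rn` (so `qa + b = n`, `0 ≤ b < a`), the Ewens eigenvalue with `θ = n`
satisfies `β_{λ^α} ≤ ((n+a)!)^q (n+b)! / ((n!)^q (2n)!)`. -/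
theorem stmt19 (n a b q : ℕ) (ha : 0 < a) (hq : 0 < q) (hb : b < a)
    (hsum : q * a + b = n)
    (Y : YoungDiagram)
    (hY : Y.rowLens = List.replicate q a ++ (if b = 0 then [] else [b])) :
    ewensEig (n : ℝ) n Y ≤
      (((n + a).factorial : ℝ)) ^ q * ((n + b).factorial : ℝ) /
        (((n.factorial : ℝ)) ^ q * (((2 * n).factorial : ℝ))) :=
  stmt19_general n a b q ha hsum Y hY
end
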